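/- arXiv:1507.05486 — 12 statements merged into one kernel-verified Lean document; each statement's English description precedes it below -/
import Mathlib

section
/- If (S, T⁺, T⁻) is an abstract spectrum, then both topological spaces (S, T⁺) and (S, T⁻) are compact T₀-spaces. -/
/-- `B` is a base for the topology `t`: every element of `B` is open and every
open set is a union of elements of `B`. -/
def IsBaseFor {S : Type*} (t : TopologicalSpace S) (B : Set (Set S)) : Prop :=
  (∀ V ∈ B, t.IsOpen V) ∧ ∀ U : Set S, t.IsOpen U → ∀ x ∈ U, ∃ V ∈ B, x ∈ V ∧ V ⊆ U

/-- The family `L⁺ = {U ∈ T⁺ : S∖U ∈ T⁻}` (for `specL tp tm`); `specL tm tp` is `L⁻`. -/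
def specL {S : Type*} (tp tm : TopologicalSpace S) : Set (Set S) :=
  {U | tp.IsOpen U ∧ tm.IsOpen Uᶜ}

/-- `(S, T⁺, T⁻)` is an abstract spectrum. -/
structure IsAbstractSpectrum {S : Type*} (tp tm : TopologicalSpace S) : Prop where
  nonempty : Nonempty S
  base_plus : IsBaseFor tp (specL tp tm)
  base_minus : IsBaseFor tm (specL tm tp)
  compact_of_plus_closed : ∀ F : Set S, @IsClosed S tp F → @IsCompact S tm F
  compact_of_minus_closed : ∀ F : Set S, @IsClosed S tm F → @IsCompact S tp F
  t0 : @T0Space S tp ∨ @T0Space S tm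

/-!
Every basic `T⁻`-open set has a `T⁺`-open complement, so two points that no `T⁺`-open set
separates are not separated by any basic `T⁻`-open set, hence by no `T⁻`-open set at all.
By symmetry the two topologies have the same inseparability relation, so one is T₀ iff the
other is. Compactness is the compactness of the closed set `S` granted by (SP2).
-/

section

variable {S : Type*}

lemma IsBaseFor.inseparable_of_forall_mem_iff {t : TopologicalSpace S} {B : Set (Set S)}
    (hB : IsBaseFor t B) {x y : S} (hxy : ∀ V ∈ B, x ∈ V ↔ y ∈ V) :
    @Inseparable S t x y := by
  rw [@inseparable_iff_forall_isOpen S t]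
  intro U hU
  constructor
  · intro hx
    obtain ⟨V, hVB, hxV, hVU⟩ := hB.2 U hU x hx
    exact hVU ((hxy V hVB).1 hxV)
  · intro hy
    obtain ⟨V, hVB, hyV, hVU⟩ := hB.2 U hU y hy
    exact hVU ((hxy V hVB).2 hyV)

lemma inseparable_of_isBaseFor_specL {tp tm : TopologicalSpace S}
    (hB : IsBaseFor tm (specL tm tp)) {x y : S} (hxy : @Inseparable S tp x y) :
    @Inseparable S tm x y := by
  refine hB.inseparable_of_forall_mem_iff fun V hV => ?_
  have hc : x ∈ Vᶜ ↔ y ∈ Vᶜ := (@inseparable_iff_forall_isOpen S tp x y).1 hxy Vᶜ hV.2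
  exact not_iff_not.1 hc

lemma t0Space_of_inseparable_imp {t t' : TopologicalSpace S}
    (h : ∀ x y : S, @Inseparable S t x y → @Inseparable S t' x y) (ht' : @T0Space S t') :
    @T0Space S t :=
  (@t0Space_iff_inseparable S t).2 fun x y hxy =>
    (@t0Space_iff_inseparable S t').1 ht' x y (h x y hxy)

namespace IsAbstractSpectrum

variable {tp tm : TopologicalSpace S}

lemma symm (h : IsAbstractSpectrum tp tm) : IsAbstractSpectrum tm tp :=
  ⟨h.nonempty, h.base_minus, h.base_plus, h.compact_of_minus_closed,
    h.compact_of_plus_closed, h.t0.symm⟩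

lemma t0Space_iff (h : IsAbstractSpectrum tp tm) : @T0Space S tp ↔ @T0Space S tm :=
  ⟨t0Space_of_inseparable_imp fun _ _ => inseparable_of_isBaseFor_specL h.base_plus,
    t0Space_of_inseparable_imp fun _ _ => inseparable_of_isBaseFor_specL h.base_minus⟩

lemma t0Space (h : IsAbstractSpectrum tp tm) : @T0Space S tp :=
  h.t0.elim id h.t0Space_iff.2

lemma compactSpace (h : IsAbstractSpectrum tp tm) : @CompactSpace S tp :=
  @CompactSpace.mk S tp (h.compact_of_minus_closed Set.univ (@isClosed_univ S tm))

end IsAbstractSpectrum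

end

/-- If `(S, T⁺, T⁻)` is an abstract spectrum then both `(S, T⁺)` and `(S, T⁻)`
are compact T₀-spaces. -/
theorem stmt0 {S : Type*} (tp tm : TopologicalSpace S)
    (h : IsAbstractSpectrum tp tm) :
    @CompactSpace S tp ∧ @T0Space S tp ∧ @CompactSpace S tm ∧ @T0Space S tm :=
  ⟨h.compactSpace, h.t0Space, h.symm.compactSpace, h.symm.t0Space⟩
end

section
/- If (S, T⁺, T⁻) is an abstract spectrum, then L⁺ = {U ∈ T⁺ : U is a compact subset of (S, T⁺)} and L⁻ = {U ∈ T⁻ : U is a compact subset of (S, T⁻)}; that is, L⁺ is exactly the family of compact open sets of (S, T⁺), and similarly for L⁻. -/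
lemma specL_eq_aux {S : Type*} (tp tm : TopologicalSpace S)
    (base : IsBaseFor tp (specL tp tm))
    (hc : ∀ F : Set S, @IsClosed S tm F → @IsCompact S tp F) :
    specL tp tm = {U : Set S | tp.IsOpen U ∧ @IsCompact S tp U} := by
  ext U
  constructor
  · rintro ⟨hU, hUc⟩
    exact ⟨hU, hc U ⟨hUc⟩⟩
  · rintro ⟨hU, hK⟩
    refine ⟨hU, ?_⟩
    have hbase := fun x (hx : x ∈ U) => base.2 U hU x hx
    choose V hVL hxV hVU using hbase
    have hcover : U ⊆ ⋃ x : U, V x x.2 := fun x hx =>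
      Set.mem_iUnion.2 ⟨⟨x, hx⟩, hxV x hx⟩
    obtain ⟨t, ht⟩ := @IsCompact.elim_finite_subcover S tp U _ hK
      (fun x : U => V x x.2) (fun x => (hVL x.1 x.2).1) hcover
    have hUeq : U = ⋃ x ∈ t, V x.1 x.2 := by
      apply Set.Subset.antisymm ht
      intro y hy
      simp only [Set.mem_iUnion] at hy
      obtain ⟨x, _, hyx⟩ := hy
      exact hVU x.1 x.2 hyx
    rw [hUeq, Set.compl_iUnion₂]
    exact @isOpen_biInter_finset S _ tm t _ (fun x _ => (hVL x.1 x.2).2)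

/-- For an abstract spectrum, `L⁺` is exactly the family of compact open sets of
`(S, T⁺)`, and `L⁻` is exactly the family of compact open sets of `(S, T⁻)`. -/
theorem stmt1 {S : Type*} (tp tm : TopologicalSpace S)
    (h : IsAbstractSpectrum tp tm) :
    specL tp tm = {U : Set S | tp.IsOpen U ∧ @IsCompact S tp U} ∧
    specL tm tp = {U : Set S | tm.IsOpen U ∧ @IsCompact S tm U} := by
  exact ⟨specL_eq_aux tp tm h.base_plus h.compact_of_minus_closed,
    specL_eq_aux tm tp h.base_minus h.compact_of_plus_closed⟩
end

section
/- If (S, T⁺, T₁⁻) and (S, T⁺, T₂⁻) are both abstract spectra (with the same first topology T⁺), then the topologies T₁⁻ and T₂⁻ coincide. -/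
open TopologicalSpace Topology

section

variable {S : Type*} {tp tm : TopologicalSpace S}

lemma IsBaseFor.eq_generateFrom {B : Set (Set S)} (h : IsBaseFor tp B) : tp = generateFrom B :=
  letI := tp
  (isTopologicalBasis_of_isOpen_of_nhds h.1 fun x U hx hU ↦ h.2 U hU x hx).eq_generateFrom

lemma IsBaseFor.isClosed_of_isCompact_of_isOpen (hbase : IsBaseFor tp (specL tp tm))
    {K : Set S} (hK : @IsCompact S tp K) (hKo : IsOpen[tp] K) : IsClosed[tm] K := by
  choose V hV hxV hVK using hbase.2 K hKo
  obtain ⟨t, hKt⟩ := @IsCompact.elim_nhds_subcover' S tp K hK V fun x hx ↦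
    @IsOpen.mem_nhds S tp _ _ (hV x hx).1 (hxV x hx)
  have hK_eq : K = ⋃ x ∈ t, V x x.2 :=
    hKt.antisymm (Set.iUnion₂_subset fun x _ ↦ hVK x x.2)
  rw [hK_eq]
  exact @isClosed_biUnion_finset S _ tm t _ fun x _ ↦ ⟨(hV x x.2).2⟩

lemma mem_specL_swap_iff (hbase : IsBaseFor tp (specL tp tm))
    (hcpt : ∀ F : Set S, IsClosed[tm] F → @IsCompact S tp F) {U : Set S} :
    U ∈ specL tm tp ↔ IsOpen[tp] Uᶜ ∧ @IsCompact S tp Uᶜ := by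
  refine ⟨fun ⟨hU, hUc⟩ ↦ ⟨hUc, hcpt Uᶜ ((@isClosed_compl_iff S tm U).2 hU)⟩,
    fun ⟨hUc, hK⟩ ↦ ⟨?_, hUc⟩⟩
  exact (@isClosed_compl_iff S tm U).1 (hbase.isClosed_of_isCompact_of_isOpen hK hUc)

end

/-- If `(S, T⁺, T₁⁻)` and `(S, T⁺, T₂⁻)` are both abstract spectra, then `T₁⁻ = T₂⁻`. -/
theorem stmt2 {S : Type*} (tp tm₁ tm₂ : TopologicalSpace S)
    (h₁ : IsAbstractSpectrum tp tm₁) (h₂ : IsAbstractSpectrum tp tm₂) :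
    tm₁ = tm₂ := by
  have hL : specL tm₁ tp = specL tm₂ tp := Set.ext fun U ↦
    (mem_specL_swap_iff h₁.base_plus h₁.compact_of_minus_closed).trans
      (mem_specL_swap_iff h₂.base_plus h₂.compact_of_minus_closed).symm
  rw [h₁.base_minus.eq_generateFrom, h₂.base_minus.eq_generateFrom, hL]
end

section
/- For a nonempty topological space (S, T), the bitopological space (S, T, T) is an abstract spectrum if and only if (S, T) is a Stone space, i.e., a compact Hausdorff zero-dimensional space. -/
/-- For a nonempty topological space `(S, T)`, the bitopological space `(S, T, T)` is an
abstract spectrum iff `(S, T)` is a Stone space: compact, Hausdorff, with a base of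
clopen sets (zero-dimensional). -/
theorem stmt3 {S : Type*} [Nonempty S] (t : TopologicalSpace S) :
    IsAbstractSpectrum t t ↔
      (@CompactSpace S t ∧ @T2Space S t ∧ IsBaseFor t {U : Set S | @IsClopen S t U}) := by
  letI := t
  have hclop : specL t t = {U : Set S | IsClopen U} := by
    ext U
    simp only [specL, Set.mem_setOf_eq]
    exact ⟨fun h => ⟨isOpen_compl_iff.mp h.2, h.1⟩,
      fun h => ⟨h.isOpen, isOpen_compl_iff.mpr h.isClosed⟩⟩
  constructor
  · rintro ⟨hne, hbp, hbm, hcp, hcm, ht0⟩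
    rw [hclop] at hbp
    have hcs : CompactSpace S := isCompact_univ_iff.mp (hcp Set.univ isClosed_univ)
    have ht0' : T0Space S := ht0.elim id id
    refine ⟨hcs, ?_, hbp⟩
    constructor
    intro x y hxy
    rcases (t0Space_iff_exists_isOpen_xor'_mem S).mp ht0' hxy with ⟨U, hU, hxor⟩
    rcases hxor with ⟨hx, hy⟩ | ⟨hy, hx⟩
    · obtain ⟨V, hV, hxV, hVU⟩ := hbp.2 U hU x hx
      exact ⟨V, Vᶜ, hV.2, hV.1.isOpen_compl, hxV, fun h => hy (hVU h), disjoint_compl_right⟩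
    · obtain ⟨V, hV, hyV, hVU⟩ := hbp.2 U hU y hy
      exact ⟨Vᶜ, V, hV.1.isOpen_compl, hV.2, fun h => hx (hVU h), hyV, (disjoint_compl_right).symm⟩
  · rintro ⟨hcs, ht2, hbase⟩
    refine ⟨inferInstance, ?_, ?_, ?_, ?_, Or.inl inferInstance⟩
    · rw [hclop]; exact hbase
    · rw [hclop]; exact hbase
    · intro F hF; exact hF.isCompact
    · intro F hF; exact hF.isCompact
end

section
/- If (S, T⁺, T⁻) is an abstract spectrum and T = sup{T⁺, T⁻} is the smallest topology containing both T⁺ and T⁻, then (S, T) is a Stone space, i.e., compact, Hausdorff, and zero-dimensional. -/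
open TopologicalSpace Set

lemma myClosed {S : Type*} {t : TopologicalSpace S} {C : Set S} (h : t.IsOpen Cᶜ) :
    @IsClosed S t C := ⟨h⟩

lemma myUnion {S : Type*} {t : TopologicalSpace S} {A B : Set S} (hA : t.IsOpen A)
    (hB : t.IsOpen B) : t.IsOpen (A ∪ B) := by
  rw [show A ∪ B = ⋃₀ {A, B} by simp]
  refine t.isOpen_sUnion _ fun s hs => ?_
  rcases hs with rfl | rfl
  exacts [hA, hB]

lemma myLeNhds {S : Type*} {t : TopologicalSpace S} {x : S} {f : Filter S}
    (h : ∀ s : Set S, x ∈ s → t.IsOpen s → s ∈ f) : f ≤ @nhds S t x := by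
  letI := t; exact le_nhds_iff.2 h

lemma myBasic {S : Type*} (tp tm : TopologicalSpace S) {W : Set S}
    (hW : TopologicalSpace.GenerateOpen {U : Set S | tp.IsOpen U ∨ tm.IsOpen U} W) :
    ∀ x ∈ W, ∃ A B : Set S, tp.IsOpen A ∧ tm.IsOpen B ∧ x ∈ A ∧ x ∈ B ∧ A ∩ B ⊆ W := by
  induction hW with
  | basic U hU =>
    intro x hx
    rcases hU with hU | hU
    · exact ⟨U, Set.univ, hU, tm.isOpen_univ, hx, trivial, fun y hy => hy.1⟩
    · exact ⟨Set.univ, U, tp.isOpen_univ, hU, trivial, hx, fun y hy => hy.2⟩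
  | univ =>
    intro x _
    exact ⟨Set.univ, Set.univ, tp.isOpen_univ, tm.isOpen_univ, trivial, trivial,
      fun y _ => trivial⟩
  | inter U V _ _ ihU ihV =>
    intro x hx
    obtain ⟨A₁, B₁, hA₁, hB₁, hxA₁, hxB₁, hsub₁⟩ := ihU x hx.1
    obtain ⟨A₂, B₂, hA₂, hB₂, hxA₂, hxB₂, hsub₂⟩ := ihV x hx.2
    exact ⟨A₁ ∩ A₂, B₁ ∩ B₂, tp.isOpen_inter _ _ hA₁ hA₂, tm.isOpen_inter _ _ hB₁ hB₂,
      ⟨hxA₁, hxA₂⟩, ⟨hxB₁, hxB₂⟩,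
      fun y hy => ⟨hsub₁ ⟨hy.1.1, hy.2.1⟩, hsub₂ ⟨hy.1.2, hy.2.2⟩⟩⟩
  | sUnion 𝒮 _ ih =>
    intro x hx
    obtain ⟨U, hU, hxU⟩ := hx
    obtain ⟨A, B, hA, hB, hxA, hxB, hsub⟩ := ih U hU x hxU
    exact ⟨A, B, hA, hB, hxA, hxB, fun y hy => ⟨U, hU, hsub hy⟩⟩

lemma t2_aux {S : Type*} (tp tm : TopologicalSpace S)
    (hbase : IsBaseFor tp (specL tp tm)) (ht0 : @T0Space S tp) :
    @T2Space S (TopologicalSpace.generateFrom {U : Set S | tp.IsOpen U ∨ tm.IsOpen U}) := by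
  set T := TopologicalSpace.generateFrom {U : Set S | tp.IsOpen U ∨ tm.IsOpen U} with hT
  have hopen : ∀ U : Set S, tp.IsOpen U ∨ tm.IsOpen U → T.IsOpen U := fun U hU =>
    TopologicalSpace.isOpen_generateFrom_of_mem hU
  refine @T2Space.mk S T fun x y hxy => ?_
  obtain ⟨W, hW, hxor⟩ := @exists_isOpen_xor'_mem S tp ht0 x y hxy
  rcases hxor with ⟨hxW, hyW⟩ | ⟨hyW, hxW⟩
  · obtain ⟨U, hU, hxU, hUW⟩ := hbase.2 W hW x hxW
    exact ⟨U, Uᶜ, hopen U (Or.inl hU.1), hopen Uᶜ (Or.inr hU.2), hxU,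
      fun hyU => hyW (hUW hyU), disjoint_compl_right⟩
  · obtain ⟨U, hU, hyU, hUW⟩ := hbase.2 W hW y hyW
    exact ⟨Uᶜ, U, hopen Uᶜ (Or.inr hU.2), hopen U (Or.inl hU.1),
      fun hxU => hxW (hUW hxU), hyU, disjoint_compl_left⟩

/-- If `(S, T⁺, T⁻)` is an abstract spectrum and `T` is the smallest topology containing
both `T⁺` and `T⁻`, then `(S, T)` is a Stone space: compact, Hausdorff and
zero-dimensional (the clopen sets form a base). -/
theorem stmt5 {S : Type*} (tp tm : TopologicalSpace S)
    (h : IsAbstractSpectrum tp tm) (t : TopologicalSpace S)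
    (ht : t = TopologicalSpace.generateFrom {U : Set S | tp.IsOpen U ∨ tm.IsOpen U}) :
    @CompactSpace S t ∧ @T2Space S t ∧ IsBaseFor t {U : Set S | @IsClopen S t U} := by
  have hopen : ∀ U : Set S, tp.IsOpen U ∨ tm.IsOpen U → t.IsOpen U := fun U hU => by
    rw [ht]; exact TopologicalSpace.isOpen_generateFrom_of_mem hU
  have hgen : ∀ W : Set S, t.IsOpen W →
      TopologicalSpace.GenerateOpen {U : Set S | tp.IsOpen U ∨ tm.IsOpen U} W := by
    intro W hW; rw [ht] at hW; exact hW
  refine ⟨?_, ?_, ?_, ?_⟩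
  · -- compactness
    rw [← @isCompact_univ_iff S t, @isCompact_iff_ultrafilter_le_nhds S t]
    intro f _
    set 𝒜 : Set (Set S) := {C | C ∈ f ∧ C ∈ specL tm tp} with h𝒜
    set ℬ : Set (Set S) := {C | C ∈ f ∧ C ∈ specL tp tm} with hℬ
    have hAclosed : ∀ C ∈ 𝒜, @IsClosed S tp C := fun C hC => myClosed hC.2.2
    have hA : @IsClosed S tp (⋂₀ 𝒜) := @isClosed_sInter S tp 𝒜 hAclosed
    have hAcompact : @IsCompact S tm (⋂₀ 𝒜) := h.compact_of_plus_closed _ hA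
    have claim1 : ∀ C : Set S, @IsCompact S tp C → C ∈ f → (C ∩ ⋂₀ 𝒜).Nonempty := by
      intro C hCcomp hCf
      have key := @IsCompact.inter_iInter_nonempty S tp C ↥𝒜 hCcomp (fun i => (i : Set S))
        (fun i => hAclosed i i.2) (fun u => by
          refine Filter.nonempty_of_mem (Filter.inter_mem hCf ?_)
          exact (Filter.biInter_finset_mem u).2 fun i _ => i.2.1)
      rw [Set.sInter_eq_iInter]; exact key
    have hZ : ((⋂₀ 𝒜) ∩ ⋂₀ ℬ).Nonempty := by
      have key := @IsCompact.inter_iInter_nonempty S tm (⋂₀ 𝒜) ↥ℬ hAcompact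
        (fun i => (i : Set S)) (fun i => myClosed i.2.2.2) (fun u => by
          have hCf : (⋂ i ∈ u, (i : Set S)) ∈ f :=
            (Filter.biInter_finset_mem u).2 fun i _ => i.2.1
          have hCcl : @IsClosed S tm (⋂ i ∈ u, (i : Set S)) :=
            @isClosed_biInter S ↥ℬ tm _ _ fun i _ => myClosed i.2.2.2
          have := claim1 _ (h.compact_of_minus_closed _ hCcl) hCf
          rwa [Set.inter_comm] at this)
      rw [Set.sInter_eq_iInter (s := ℬ)]; exact key
    obtain ⟨x, hxA, hxB⟩ := hZ
    refine ⟨x, trivial, ?_⟩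
    refine myLeNhds fun W hxW hW => ?_
    obtain ⟨A, B, hAop, hBop, hxA', hxB', hsub⟩ := myBasic tp tm (hgen W hW) x hxW
    obtain ⟨U, hU, hxU, hUA⟩ := h.base_plus.2 A hAop x hxA'
    obtain ⟨V, hV, hxV, hVB⟩ := h.base_minus.2 B hBop x hxB'
    have hUf : U ∈ f := by
      by_contra hn
      have h1 : Uᶜ ∈ f := Ultrafilter.compl_mem_iff_notMem.2 hn
      have h2 : Uᶜ ∈ 𝒜 := ⟨h1, hU.2, by rw [compl_compl]; exact hU.1⟩
      exact (Set.mem_sInter.1 hxA Uᶜ h2) hxU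
    have hVf : V ∈ f := by
      by_contra hn
      have h1 : Vᶜ ∈ f := Ultrafilter.compl_mem_iff_notMem.2 hn
      have h2 : Vᶜ ∈ ℬ := ⟨h1, hV.2, by rw [compl_compl]; exact hV.1⟩
      exact (Set.mem_sInter.1 hxB Vᶜ h2) hxV
    exact Filter.mem_of_superset (Filter.inter_mem hUf hVf)
      (fun y hy => hsub ⟨hUA hy.1, hVB hy.2⟩)
  · -- T2
    rcases h.t0 with h0 | h0
    · rw [ht]; exact t2_aux tp tm h.base_plus h0
    · have := t2_aux tm tp h.base_minus h0
      rw [show {U : Set S | tm.IsOpen U ∨ tp.IsOpen U} = {U : Set S | tp.IsOpen U ∨ tm.IsOpen U}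
        from Set.ext fun U => or_comm] at this
      rw [ht]; exact this
  · exact fun V hV => hV.2
  · intro W hW x hxW
    obtain ⟨A, B, hAop, hBop, hxA, hxB, hsub⟩ := myBasic tp tm (hgen W hW) x hxW
    obtain ⟨U, hU, hxU, hUA⟩ := h.base_plus.2 A hAop x hxA
    obtain ⟨V, hV, hxV, hVB⟩ := h.base_minus.2 B hBop x hxB
    refine ⟨U ∩ V, ⟨⟨?_⟩, ?_⟩, ⟨hxU, hxV⟩, fun y hy => hsub ⟨hUA hy.1, hVB hy.2⟩⟩
    · rw [Set.compl_inter]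
      exact myUnion (hopen _ (Or.inr hU.2)) (hopen _ (Or.inl hV.2))
    · exact t.isOpen_inter _ _ (hopen U (Or.inl hU.1)) (hopen V (Or.inr hV.1))
end

section
/- Let X be a set and S a nonempty family of subsets of X. For x ∈ X put U⁺ₓ = {p ∈ S : x ∉ p} and U⁻ₓ = {p ∈ S : x ∈ p}, let T⁺ (resp. T⁻) be the topology on S generated by the subbase {U⁺ₓ : x ∈ X} (resp. {U⁻ₓ : x ∈ X}). Then (S, T⁺, T⁻) is an abstract spectrum if and only if S, viewed via characteristic functions as a subset of the Cantor cube D^X (the product of X copies of the two-point discrete space), is closed in D^X. -/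
/-- The characteristic function of a subset `A ⊆ X`, viewed as a point of the Cantor
cube `Bool^X` (with `Bool` discrete and the product topology). -/
noncomputable def chi {X : Type*} (A : Set X) : X → Bool :=
  fun x => @decide (x ∈ A) (Classical.propDecidable _)

open TopologicalSpace Filter Set

lemma chi_eq_true {X : Type*} {A : Set X} {x : X} : chi A x = true ↔ x ∈ A := by
  simp [chi]

lemma chi_eq_false {X : Type*} {A : Set X} {x : X} : chi A x = false ↔ x ∉ A := by
  simp [chi]

lemma base_gen {S : Type*} (tt : TopologicalSpace S) (s : Set (Set S))
    (h : ∀ U ∈ s, tt.IsOpen Uᶜ) :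
    IsBaseFor (TopologicalSpace.generateFrom s)
      (specL (TopologicalSpace.generateFrom s) tt) := by
  letI := TopologicalSpace.generateFrom s
  have hb : IsTopologicalBasis ((fun f : Set (Set S) => ⋂₀ f) '' { f : Set (Set S) | f.Finite ∧ f ⊆ s }) :=
    isTopologicalBasis_of_subbasis rfl
  constructor
  · exact fun V hV => hV.1
  · intro U hU x hx
    obtain ⟨V, hVb, hxV, hVU⟩ := hb.exists_subset_of_mem_open hx hU
    refine ⟨V, ⟨hb.isOpen hVb, ?_⟩, hxV, hVU⟩
    obtain ⟨c, ⟨hcf, hcs⟩, rfl⟩ := hVb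
    rw [Set.compl_sInter]
    exact tt.isOpen_sUnion _ (by rintro _ ⟨W, hW, rfl⟩; exact h W (hcs hW))

lemma mem_of_closed' {α : Type*} [TopologicalSpace α] {F : Set α} (hF : IsClosed F)
    {f : Filter α} [f.NeBot] (hFf : F ∈ f) {q : α} (hq : f ≤ nhds q) : q ∈ F := by
  rw [← hF.closure_eq]
  exact mem_closure_iff_clusterPt.mpr
    (neBot_of_le (le_inf hq (le_principal_iff.mpr hFf)))

lemma closed_iInter' {α : Type*} (t : TopologicalSpace α) {ι : Sort*} {f : ι → Set α}
    (h : ∀ i, @IsClosed α t (f i)) : @IsClosed α t (⋂ i, f i) := by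
  letI := t; exact isClosed_iInter h

lemma inter_iInter_nonempty' {α : Type*} (t : TopologicalSpace α) {s : Set α} {ι : Type*}
    (hs : @IsCompact α t s) (f : ι → Set α) (hf : ∀ i, @IsClosed α t (f i))
    (h : ∀ u : Finset ι, (s ∩ ⋂ i ∈ u, f i).Nonempty) : (s ∩ ⋂ i, f i).Nonempty := by
  letI := t; exact hs.inter_iInter_nonempty f hf h

lemma closed_basic_plus {X : Type*} (S : Set (Set X)) (x : X) :
    @IsClosed _ (TopologicalSpace.generateFrom
      {U : Set S | ∃ x : X, U = {p : S | x ∉ (p : Set X)}}) {p : S | x ∈ (p : Set X)} := by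
  letI := TopologicalSpace.generateFrom
    {U : Set S | ∃ x : X, U = {p : S | x ∉ (p : Set X)}}
  exact ⟨isOpen_generateFrom_of_mem ⟨x, rfl⟩⟩

lemma closed_basic_minus {X : Type*} (S : Set (Set X)) (x : X) :
    @IsClosed _ (TopologicalSpace.generateFrom
      {U : Set S | ∃ x : X, U = {p : S | x ∈ (p : Set X)}}) {p : S | x ∉ (p : Set X)} := by
  letI := TopologicalSpace.generateFrom
    {U : Set S | ∃ x : X, U = {p : S | x ∈ (p : Set X)}}
  refine ⟨?_⟩
  rw [show ({p : S | x ∉ (p : Set X)}ᶜ) = {p : S | x ∈ (p : Set X)} from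
    Set.ext fun p => not_not]
  exact isOpen_generateFrom_of_mem ⟨x, rfl⟩

lemma compact_of_ultra {α : Type*} [TopologicalSpace α] {F : Set α}
    (h : ∀ f : Ultrafilter α, F ∈ f → ∃ q ∈ F, ↑f ≤ nhds q) : IsCompact F :=
  isCompact_iff_ultrafilter_le_nhds.mpr fun f hf => h f (le_principal_iff.mp hf)

lemma key_conv {X : Type*} (S : Set (Set X)) (hcl : IsClosed (chi '' S : Set (X → Bool)))
    (f : Ultrafilter S) :
    ∃ q : S,
      (↑f ≤ @nhds _ (TopologicalSpace.generateFrom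
          {U : Set S | ∃ x : X, U = {p : S | x ∉ (p : Set X)}}) q) ∧
      (↑f ≤ @nhds _ (TopologicalSpace.generateFrom
          {U : Set S | ∃ x : X, U = {p : S | x ∈ (p : Set X)}}) q) := by
  let e : S → (X → Bool) := fun p => chi (p : Set X)
  have hmap : ↑(f.map e) ≤ nhds (f.map e : Ultrafilter (X → Bool)).lim :=
    Ultrafilter.le_nhds_lim _
  set g := (f.map e : Ultrafilter (X → Bool)).lim with hg
  have hgS : g ∈ chi '' S := by
    rw [← hcl.closure_eq]
    refine mem_closure_iff_clusterPt.mpr (neBot_of_le (f := ↑(f.map e))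
      (le_inf hmap (le_principal_iff.mpr ?_)))
    exact Filter.mem_map.mpr (mem_of_superset univ_mem fun p _ => ⟨↑p, p.2, rfl⟩)
  obtain ⟨A, hA, hgA⟩ := hgS
  have hagree : ∀ x : X, {p : S | chi (p : Set X) x = g x} ∈ f := by
    intro x
    have hopen : IsOpen ((fun h : X → Bool => h x) ⁻¹' {g x}) :=
      (isOpen_discrete ({g x} : Set Bool)).preimage (continuous_apply x)
    have hmem := hmap (hopen.mem_nhds (show g x ∈ ({g x} : Set Bool) from rfl))
    filter_upwards [Filter.mem_map.mp hmem] with p hp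
    exact hp
  refine ⟨⟨A, hA⟩, ?_, ?_⟩
  · rw [TopologicalSpace.nhds_generateFrom]
    refine le_iInf₂ fun V hV => ?_
    obtain ⟨hqV, x, rfl⟩ := hV
    have hxA : x ∉ A := hqV
    rw [le_principal_iff]
    refine Filter.mem_of_superset (hagree x) fun p hp hxp => ?_
    have h1 : chi (p : Set X) x = true := chi_eq_true.mpr hxp
    have h2 : g x = false := by rw [← hgA]; exact chi_eq_false.mpr hxA
    rw [hp, h2] at h1
    exact Bool.false_ne_true h1
  · rw [TopologicalSpace.nhds_generateFrom]
    refine le_iInf₂ fun V hV => ?_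
    obtain ⟨hqV, x, rfl⟩ := hV
    have hxA : x ∈ A := hqV
    rw [le_principal_iff]
    refine Filter.mem_of_superset (hagree x) fun p hp => ?_
    have h2 : g x = true := by rw [← hgA]; exact chi_eq_true.mpr hxA
    rw [h2] at hp
    exact chi_eq_true.mp hp

/-- Let `S` be a nonempty family of subsets of `X`, with `T⁺` generated by the subbase
`{U⁺ₓ = {p ∈ S : x ∉ p} : x ∈ X}` and `T⁻` generated by `{U⁻ₓ = {p ∈ S : x ∈ p} : x ∈ X}`.
Then `(S, T⁺, T⁻)` is an abstract spectrum iff `S`, viewed via characteristic functions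
as a subset of the Cantor cube `Bool^X`, is closed there. -/
theorem stmt7 {X : Type*} (S : Set (Set X)) (hS : S.Nonempty) :
    IsAbstractSpectrum
        (TopologicalSpace.generateFrom
          {U : Set S | ∃ x : X, U = {p : S | x ∉ (p : Set X)}})
        (TopologicalSpace.generateFrom
          {U : Set S | ∃ x : X, U = {p : S | x ∈ (p : Set X)}}) ↔
      IsClosed (chi '' S : Set (X → Bool)) := by
  classical
  set tp := TopologicalSpace.generateFrom
    {U : Set S | ∃ x : X, U = {p : S | x ∉ (p : Set X)}} with htp
  set tm := TopologicalSpace.generateFrom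
    {U : Set S | ∃ x : X, U = {p : S | x ∈ (p : Set X)}} with htm
  have hCcl : ∀ x : X, @IsClosed _ tp {p : S | x ∈ (p : Set X)} := fun x => by
    rw [htp]; exact closed_basic_plus S x
  have hDcl : ∀ x : X, @IsClosed _ tm {p : S | x ∉ (p : Set X)} := fun x => by
    rw [htm]; exact closed_basic_minus S x
  constructor
  · -- spectrum → closed
    intro h
    refine isClosed_of_closure_subset fun f hf => ?_
    have hfip : ∀ t : Finset X, ∃ p ∈ S, ∀ x ∈ t, chi p x = f x := by
      intro t
      have hopen : IsOpen {h : X → Bool | ∀ x ∈ t, h x = f x} := by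
        have heq : {h : X → Bool | ∀ x ∈ t, h x = f x}
            = ⋂ x ∈ t, (fun h : X → Bool => h x) ⁻¹' {f x} := by
          ext h; simp
        rw [heq]
        exact isOpen_biInter_finset fun x _ =>
          (isOpen_discrete _).preimage (continuous_apply x)
      obtain ⟨g, hg1, hg2⟩ := (mem_closure_iff.mp hf) _ hopen (fun x _ => rfl)
      obtain ⟨p, hp, rfl⟩ := hg2
      exact ⟨p, hp, hg1⟩
    set A : Set X := {x | f x = true} with hA
    have hfA : chi A = f := by
      funext x
      rcases hb : f x with _ | _
      · exact chi_eq_false.mpr (by simp [hA, hb])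
      · exact chi_eq_true.mpr (by simp [hA, hb])
    have hfin : ∀ u v : Finset X, (∀ x ∈ u, f x = false) → (∀ x ∈ v, f x = true) →
        ∃ p : S, (∀ x ∈ u, x ∉ (p : Set X)) ∧ (∀ x ∈ v, x ∈ (p : Set X)) := by
      intro u v hu hv
      obtain ⟨p, hpS, hp⟩ := hfip (u ∪ v)
      refine ⟨⟨p, hpS⟩, fun x hx => ?_, fun x hx => ?_⟩
      · have h1 := hp x (Finset.mem_union_left _ hx)
        rw [hu x hx] at h1; exact chi_eq_false.mp h1
      · have h1 := hp x (Finset.mem_union_right _ hx)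
        rw [hv x hx] at h1; exact chi_eq_true.mp h1
    set C : Set S := ⋂ x : ↥A, {p : S | (x : X) ∈ (p : Set X)} with hC
    have hCclosed : @IsClosed _ tp C := closed_iInter' tp fun x => hCcl ↑x
    have hCcomp : @IsCompact _ tm C := h.compact_of_plus_closed C hCclosed
    have hstep1 : ∀ u : Finset ↥(Aᶜ),
        (C ∩ ⋂ x ∈ u, {p : S | (x : X) ∉ (p : Set X)}).Nonempty := by
      intro u
      set K : Set S := ⋂ x ∈ u, {p : S | (x : X) ∉ (p : Set X)} with hK
      have hKcl : @IsClosed _ tm K :=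
        closed_iInter' tm fun x => closed_iInter' tm fun _ => hDcl ↑x
      have hKcomp : @IsCompact _ tp K := h.compact_of_minus_closed K hKcl
      have hmain := inter_iInter_nonempty' tp hKcomp
        (fun x : ↥A => {p : S | (x : X) ∈ (p : Set X)}) (fun x => hCcl ↑x) ?_
      · obtain ⟨p, hpK, hpC⟩ := hmain
        exact ⟨p, hpC, hpK⟩
      · intro v
        obtain ⟨p, hp1, hp2⟩ := hfin (u.image Subtype.val) (v.image Subtype.val)
          (by
            intro x hx
            obtain ⟨⟨y, hy⟩, _, rfl⟩ := Finset.mem_image.mp hx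
            exact Bool.eq_false_iff.mpr hy)
          (by
            intro x hx
            obtain ⟨⟨y, hy⟩, _, rfl⟩ := Finset.mem_image.mp hx
            exact hy)
        refine ⟨p, ?_, ?_⟩
        · simp only [hK, Set.mem_iInter, Set.mem_setOf_eq]
          intro x hx
          exact hp1 ↑x (Finset.mem_image_of_mem _ hx)
        · simp only [Set.mem_iInter, Set.mem_setOf_eq]
          intro x hx
          exact hp2 ↑x (Finset.mem_image_of_mem _ hx)
    have hmain2 := inter_iInter_nonempty' tm hCcomp
      (fun x : ↥(Aᶜ) => {p : S | (x : X) ∉ (p : Set X)}) (fun x => hDcl ↑x) hstep1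
    obtain ⟨p, hpC, hpD⟩ := hmain2
    have hpA : (p : Set X) = A := by
      ext y
      constructor
      · intro hy
        by_contra hyA
        exact Set.mem_iInter.mp hpD ⟨y, hyA⟩ hy
      · intro hy
        exact Set.mem_iInter.mp hpC ⟨y, hy⟩
    exact ⟨A, hpA ▸ p.2, hfA⟩
  · -- closed → spectrum
    intro hcl
    refine ⟨hS.to_subtype, ?_, ?_, ?_, ?_, ?_⟩
    · rw [htp, htm]
      refine base_gen _ _ fun U hU => ?_
      obtain ⟨x, rfl⟩ := hU
      rw [show ({p : S | x ∉ (p : Set X)}ᶜ) = {p : S | x ∈ (p : Set X)} from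
        Set.ext fun p => not_not]
      exact isOpen_generateFrom_of_mem ⟨x, rfl⟩
    · rw [htp, htm]
      refine base_gen _ _ fun U hU => ?_
      obtain ⟨x, rfl⟩ := hU
      exact isOpen_generateFrom_of_mem ⟨x, rfl⟩
    · intro F hF
      refine @compact_of_ultra S tm F fun f hFf => ?_
      obtain ⟨q, h1, h2⟩ := key_conv S hcl f
      rw [← htp] at h1
      rw [← htm] at h2
      exact ⟨q, @mem_of_closed' S tp F hF f f.neBot hFf q h1, h2⟩
    · intro F hF
      refine @compact_of_ultra S tp F fun f hFf => ?_
      obtain ⟨q, h1, h2⟩ := key_conv S hcl f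
      rw [← htp] at h1
      rw [← htm] at h2
      exact ⟨q, @mem_of_closed' S tm F hF f f.neBot hFf q h2, h1⟩
    · refine Or.inl ?_
      letI := tp
      rw [t0Space_iff_exists_isOpen_xor'_mem]
      intro p q hpq
      have hne : ¬ ∀ y, y ∈ (p : Set X) ↔ y ∈ (q : Set X) := fun hy =>
        hpq (Subtype.ext (Set.ext hy))
      obtain ⟨x, hx⟩ := not_forall.mp hne
      refine ⟨{r : S | x ∉ (r : Set X)}, ?_, ?_⟩
      · show tp.IsOpen _
        rw [htp]
        exact isOpen_generateFrom_of_mem ⟨x, rfl⟩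
      · simp only [Set.mem_setOf_eq, Xor']
        tauto
end

section
/- Let (A, +, ·) be a commutative ring with unit, 0 ≠ 1. Define multivalued operations on A by x ⊕ y = the ring ideal generated by {x, y}, and x ⊗ y = {x · y}. Then a subset p ⊆ A is a proper prime ideal of (A, ⊕, ⊗) — i.e., 0 ∈ p, 1 ∉ p, x, y ∈ p implies x ⊕ y ⊆ p, and (x ⊗ y) ∩ p ≠ ∅ implies x ∈ p or y ∈ p — if and only if p is a prime ideal of the ring A in the classical sense (an ideal p ≠ A such that x·y ∈ p implies x ∈ p or y ∈ p). Moreover, the topology on this set of prime ideals generated by the subbase {U⁺ₐ : a ∈ A}, where U⁺ₐ = {p : a ∉ p}, coincides with the Zariski topology, whose open sets are the sets U_I = {p : I ⊄ p} for ring ideals I of A. -/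
/-- The set of proper prime ideals of `(A, ⊕, ⊗)` where `x ⊕ y` is the ring ideal
generated by `{x, y}` and `x ⊗ y = {x · y}`: subsets `p` with `0 ∈ p`, `1 ∉ p`,
closed under `⊕` and prime with respect to `⊗`. -/
def ringProperPrimes (A : Type*) [CommRing A] : Set (Set A) :=
  {p | 0 ∈ p ∧ 1 ∉ p ∧
    (∀ x ∈ p, ∀ y ∈ p, (Ideal.span {x, y} : Set A) ⊆ p) ∧
    (∀ x y : A, (({x * y} : Set A) ∩ p).Nonempty → x ∈ p ∨ y ∈ p)}

/-- For a commutative ring `A` with `0 ≠ 1`: a subset `p ⊆ A` is a proper prime ideal of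
`(A, ⊕, ⊗)` iff it is a prime ideal of the ring `A` in the classical sense; moreover, the
topology on the set of such `p` generated by the subbase `{U⁺ₐ = {p : a ∉ p} : a ∈ A}`
coincides with the Zariski topology, whose open sets are the sets
`U_I = {p : I ⊄ p}` for ring ideals `I` of `A`. -/
theorem stmt10 {A : Type*} [CommRing A] (h01 : (0 : A) ≠ 1) :
    (∀ p : Set A, p ∈ ringProperPrimes A ↔
      ∃ I : Ideal A, I.IsPrime ∧ p = (I : Set A)) ∧
    (∀ U : Set (ringProperPrimes A),
      (TopologicalSpace.generateFrom
        {V : Set (ringProperPrimes A) |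
          ∃ a : A, V = {p : ringProperPrimes A | a ∉ (p : Set A)}}).IsOpen U ↔
      ∃ I : Ideal A, U = {p : ringProperPrimes A | ¬ (I : Set A) ⊆ (p : Set A)}) := by
  have part1 : ∀ p : Set A, p ∈ ringProperPrimes A ↔
      ∃ I : Ideal A, I.IsPrime ∧ p = (I : Set A) := by
    intro p
    constructor
    · rintro ⟨h0, h1, hadd, hmul⟩
      refine ⟨{ carrier := p
                add_mem' := ?_
                zero_mem' := h0
                smul_mem' := ?_ }, ⟨?_, ?_⟩, rfl⟩
      · intro x y hx hy
        exact hadd x hx y hy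
          (Ideal.add_mem _ (Ideal.subset_span (by simp)) (Ideal.subset_span (by simp)))
      · intro r x hx
        exact hadd x hx x hx (Ideal.mul_mem_left _ r (Ideal.subset_span (by simp)))
      · exact (Ideal.ne_top_iff_one _).mpr h1
      · intro x y hxy
        exact hmul x y ⟨x * y, rfl, hxy⟩
    · rintro ⟨I, hI, rfl⟩
      refine ⟨I.zero_mem, (Ideal.ne_top_iff_one I).mp hI.ne_top, ?_, ?_⟩
      · intro x hx y hy
        refine SetLike.coe_subset_coe.mpr (Ideal.span_le.mpr ?_)
        intro z hz
        simp only [Set.mem_insert_iff, Set.mem_singleton_iff] at hz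
        rcases hz with rfl | rfl <;> assumption
      · rintro x y ⟨z, hz1, hz2⟩
        rw [Set.mem_singleton_iff] at hz1
        subst hz1
        exact hI.mem_or_mem hz2
  refine ⟨part1, fun U => ?_⟩
  constructor
  · intro hU
    induction hU with
    | basic V hV =>
      obtain ⟨a, rfl⟩ := hV
      refine ⟨Ideal.span {a}, ?_⟩
      ext p
      obtain ⟨I, hI, hIp⟩ := (part1 p.1).mp p.2
      simp only [Set.mem_setOf_eq, hIp, SetLike.coe_subset_coe,
        Ideal.span_singleton_le_iff_mem]
      exact Iff.rfl
    | univ =>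
      refine ⟨⊤, ?_⟩
      ext p
      simp only [Set.mem_univ, Set.mem_setOf_eq, true_iff]
      exact fun hsub => p.2.2.1 (hsub Submodule.mem_top)
    | inter U V hU hV ihU ihV =>
      obtain ⟨I, rfl⟩ := ihU
      obtain ⟨J, rfl⟩ := ihV
      refine ⟨I * J, ?_⟩
      ext p
      obtain ⟨P, hP, hPp⟩ := (part1 p.1).mp p.2
      simp only [Set.mem_inter_iff, Set.mem_setOf_eq, hPp, SetLike.coe_subset_coe,
        hP.mul_le]
      tauto
    | sUnion S hS ih =>
      choose f hf using ih
      refine ⟨⨆ s : S, f s.1 s.2, ?_⟩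
      ext p
      obtain ⟨P, hP, hPp⟩ := (part1 p.1).mp p.2
      simp only [Set.mem_sUnion, Set.mem_setOf_eq, hPp, SetLike.coe_subset_coe,
        iSup_le_iff]
      push_neg
      constructor
      · rintro ⟨t, ht, hpt⟩
        refine ⟨⟨t, ht⟩, ?_⟩
        rw [hf t ht] at hpt
        simp only [Set.mem_setOf_eq, hPp, SetLike.coe_subset_coe] at hpt
        exact hpt
      · rintro ⟨⟨t, ht⟩, hlt⟩
        refine ⟨t, ht, ?_⟩
        rw [hf t ht]
        simp only [Set.mem_setOf_eq, hPp, SetLike.coe_subset_coe]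
        exact hlt
  · rintro ⟨I, rfl⟩
    have heq : {p : ringProperPrimes A | ¬ (I : Set A) ⊆ (p : Set A)} =
        ⋃ a ∈ (I : Set A), {p : ringProperPrimes A | a ∉ (p : Set A)} := by
      ext p
      simp [Set.not_subset]
    rw [heq, ← Set.sUnion_image]
    exact TopologicalSpace.GenerateOpen.sUnion _
      (by rintro _ ⟨a, ha, rfl⟩; exact .basic _ ⟨a, rfl⟩)
end

section
/- Let (L, ∨, ∧, 0, 1) be a distributive lattice with bottom 0 and top 1, 0 ≠ 1. Define multivalued operations on L by x ⊕ y = {z ∈ L : z ≤ x ∨ y} and x ⊗ y = {z ∈ L : z ≥ x ∧ y}. Then a subset p ⊆ L is a proper prime ideal of (L, ⊕, ⊗) — i.e., 0 ∈ p, 1 ∉ p, x, y ∈ p implies x ⊕ y ⊆ p, and (x ⊗ y) ∩ p ≠ ∅ implies x ∈ p or y ∈ p — if and only if p is a prime ideal of the lattice L in the classical sense: a nonempty subset of L closed under ∨ and downward closed, with 1 ∉ p, such that a ∧ b ∈ p implies a ∈ p or b ∈ p. Moreover, the topology on this set of prime ideals generated by the subbase {U⁺ₐ : a ∈ L}, where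 U⁺ₐ = {p : a ∉ p}, coincides with the Stone topology, whose open sets are the sets U_I = {p : I ⊄ p} for lattice ideals I of L. -/
/-! Both kinds of prime ideal are the downward closed sets containing `⊥`, closed under `⊔`,
omitting `⊤` and prime for `⊓`. For the topologies, `p ↦ ¬ I ⊆ p` turns ideals into opens:
`Iic a` gives the subbasic open `U⁺ₐ`, `univ` the whole space, and primality makes it turn
`I ∩ J` into an intersection; an arbitrary union of such opens comes from the ideal generated
by the union of the ideals. Conversely `U_I` is the union of the `U⁺ₐ` with `a ∈ I`. -/

/-- The set of proper prime ideals of `(L, ⊕, ⊗)` where `x ⊕ y = {z : z ≤ x ∨ y}` and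
`x ⊗ y = {z : z ≥ x ∧ y}`: subsets `p` with `0 ∈ p`, `1 ∉ p`, closed under `⊕` and prime
with respect to `⊗`. -/
def latProperPrimes (L : Type*) [DistribLattice L] [BoundedOrder L] : Set (Set L) :=
  {p | ⊥ ∈ p ∧ ⊤ ∉ p ∧
    (∀ x ∈ p, ∀ y ∈ p, {z : L | z ≤ x ⊔ y} ⊆ p) ∧
    (∀ x y : L, ({z : L | x ⊓ y ≤ z} ∩ p).Nonempty → x ∈ p ∨ y ∈ p)}

/-- A prime ideal of a lattice `L` in the classical sense: a nonempty subset closed under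
`∨` and downward closed, with `1 ∉ p`, such that `a ∧ b ∈ p` implies `a ∈ p` or `b ∈ p`. -/
def IsClassicalPrimeLatticeIdeal {L : Type*} [DistribLattice L] [BoundedOrder L]
    (p : Set L) : Prop :=
  p.Nonempty ∧ (∀ a ∈ p, ∀ b ∈ p, a ⊔ b ∈ p) ∧ (∀ a ∈ p, ∀ b : L, b ≤ a → b ∈ p) ∧
  (⊤ : L) ∉ p ∧ (∀ a b : L, a ⊓ b ∈ p → a ∈ p ∨ b ∈ p)

/-- A lattice ideal of `L`: a nonempty subset closed under `∨` and downward closed. -/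
def IsLatticeIdealSet {L : Type*} [DistribLattice L] [BoundedOrder L] (I : Set L) : Prop :=
  I.Nonempty ∧ (∀ a ∈ I, ∀ b ∈ I, a ⊔ b ∈ I) ∧ (∀ a ∈ I, ∀ b : L, b ≤ a → b ∈ I)

section

variable {L : Type*} [DistribLattice L] [BoundedOrder L]

namespace IsLatticeIdealSet

variable {I J : Set L}

theorem sup_mem (hI : IsLatticeIdealSet I) {a b : L} (ha : a ∈ I) (hb : b ∈ I) : a ⊔ b ∈ I :=
  hI.2.1 a ha b hb

theorem mem_of_le (hI : IsLatticeIdealSet I) {a b : L} (ha : a ∈ I) (hba : b ≤ a) : b ∈ I :=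
  hI.2.2 a ha b hba

theorem bot_mem (hI : IsLatticeIdealSet I) : ⊥ ∈ I :=
  hI.mem_of_le hI.1.some_mem bot_le

theorem finsetSup_mem (hI : IsLatticeIdealSet I) {t : Finset L} (ht : ↑t ⊆ I) :
    t.sup id ∈ I :=
  Finset.sup_induction hI.bot_mem (fun _ ha _ hb => hI.sup_mem ha hb) ht

theorem Iic_subset_iff (hI : IsLatticeIdealSet I) {a : L} : Set.Iic a ⊆ I ↔ a ∈ I :=
  ⟨fun h => h le_rfl, fun ha _ hb => hI.mem_of_le ha hb⟩

theorem inter (hI : IsLatticeIdealSet I) (hJ : IsLatticeIdealSet J) :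
    IsLatticeIdealSet (I ∩ J) :=
  ⟨⟨⊥, hI.bot_mem, hJ.bot_mem⟩, fun _ ha _ hb => ⟨hI.sup_mem ha.1 hb.1, hJ.sup_mem ha.2 hb.2⟩,
    fun _ ha _ hba => ⟨hI.mem_of_le ha.1 hba, hJ.mem_of_le ha.2 hba⟩⟩

end IsLatticeIdealSet

theorem isLatticeIdealSet_Iic (a : L) : IsLatticeIdealSet (Set.Iic a) :=
  ⟨⟨a, le_rfl⟩, fun _ hx _ hy => sup_le hx hy, fun _ hx _ hy => hy.trans hx⟩

theorem isLatticeIdealSet_univ : IsLatticeIdealSet (Set.univ : Set L) :=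
  ⟨Set.univ_nonempty, fun _ _ _ _ => trivial, fun _ _ _ _ => trivial⟩

def idealSpan (S : Set L) : Set L :=
  {x | ∃ t : Finset L, ↑t ⊆ S ∧ x ≤ t.sup id}

theorem subset_idealSpan (S : Set L) : S ⊆ idealSpan S :=
  fun a ha => ⟨{a}, by simpa using ha, by simp⟩

theorem isLatticeIdealSet_idealSpan (S : Set L) : IsLatticeIdealSet (idealSpan S) := by
  classical
  refine ⟨⟨⊥, ∅, by simp, bot_le⟩, ?_, ?_⟩
  · rintro a ⟨s, hsS, has⟩ b ⟨t, htS, hbt⟩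
    refine ⟨s ∪ t, by simpa using ⟨hsS, htS⟩, ?_⟩
    rw [Finset.sup_union]
    exact sup_le_sup has hbt
  · rintro a ⟨t, htS, hat⟩ b hba
    exact ⟨t, htS, hba.trans hat⟩

theorem IsLatticeIdealSet.idealSpan_subset_iff {I S : Set L} (hI : IsLatticeIdealSet I) :
    idealSpan S ⊆ I ↔ S ⊆ I :=
  ⟨(subset_idealSpan S).trans, fun hS _ ⟨_, htS, hxt⟩ =>
    hI.mem_of_le (hI.finsetSup_mem (htS.trans hS)) hxt⟩

namespace IsClassicalPrimeLatticeIdeal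

variable {p : Set L}

theorem isLatticeIdealSet (hp : IsClassicalPrimeLatticeIdeal p) : IsLatticeIdealSet p :=
  ⟨hp.1, hp.2.1, hp.2.2.1⟩

theorem top_notMem (hp : IsClassicalPrimeLatticeIdeal p) : (⊤ : L) ∉ p :=
  hp.2.2.2.1

theorem mem_or_mem (hp : IsClassicalPrimeLatticeIdeal p) {a b : L} (hab : a ⊓ b ∈ p) :
    a ∈ p ∨ b ∈ p :=
  hp.2.2.2.2 a b hab

theorem inter_subset_iff (hp : IsClassicalPrimeLatticeIdeal p) {I J : Set L}
    (hI : IsLatticeIdealSet I) (hJ : IsLatticeIdealSet J) : I ∩ J ⊆ p ↔ I ⊆ p ∨ J ⊆ p := by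
  refine ⟨fun hIJ => ?_, fun h => h.elim (Set.inter_subset_left.trans ·)
    (Set.inter_subset_right.trans ·)⟩
  by_contra! ⟨hIp, hJp⟩
  obtain ⟨a, haI, hap⟩ := Set.not_subset.1 hIp
  obtain ⟨b, hbJ, hbp⟩ := Set.not_subset.1 hJp
  have hab : a ⊓ b ∈ I ∩ J := ⟨hI.mem_of_le haI inf_le_left, hJ.mem_of_le hbJ inf_le_right⟩
  exact (hp.mem_or_mem (hIJ hab)).elim hap hbp

end IsClassicalPrimeLatticeIdeal

theorem mem_latProperPrimes_iff {p : Set L} :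
    p ∈ latProperPrimes L ↔ IsClassicalPrimeLatticeIdeal p := by
  constructor
  · rintro ⟨hbot, htop, hplus, hmul⟩
    exact ⟨⟨⊥, hbot⟩, fun a ha b hb => hplus a ha b hb le_rfl,
      fun a ha b hba => hplus a ha a ha (hba.trans le_sup_left), htop,
      fun a b hab => hmul a b ⟨a ⊓ b, le_rfl, hab⟩⟩
  · intro hp
    have hp' := hp.isLatticeIdealSet
    exact ⟨hp'.bot_mem, hp.top_notMem, fun x hx y hy _ hz => hp'.mem_of_le (hp'.sup_mem hx hy) hz,
      fun x y ⟨_, hz, hzp⟩ => hp.mem_or_mem (hp'.mem_of_le hzp hz)⟩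

theorem isClassicalPrimeLatticeIdeal_coe (p : latProperPrimes L) :
    IsClassicalPrimeLatticeIdeal (p : Set L) :=
  mem_latProperPrimes_iff.1 p.2

def stoneOpen (S : Set L) : Set (latProperPrimes L) :=
  {p | ¬ S ⊆ (p : Set L)}

theorem stoneOpen_Iic (a : L) : stoneOpen (Set.Iic a) = {p : latProperPrimes L | a ∉ (p : Set L)} := by
  ext p
  simp only [stoneOpen, Set.mem_ofPred_eq,
    (isClassicalPrimeLatticeIdeal_coe p).isLatticeIdealSet.Iic_subset_iff]

theorem stoneOpen_univ : stoneOpen (Set.univ : Set L) = Set.univ :=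
  Set.eq_univ_of_forall fun p hp => (isClassicalPrimeLatticeIdeal_coe p).top_notMem (hp trivial)

theorem stoneOpen_inter {I J : Set L} (hI : IsLatticeIdealSet I) (hJ : IsLatticeIdealSet J) :
    stoneOpen (I ∩ J) = stoneOpen I ∩ stoneOpen J := by
  ext p
  simp only [stoneOpen, Set.mem_ofPred_eq, Set.mem_inter_iff,
    (isClassicalPrimeLatticeIdeal_coe p).inter_subset_iff hI hJ, not_or]

theorem stoneOpen_idealSpan (S : Set L) : stoneOpen (idealSpan S) = stoneOpen S := by
  ext p
  simp only [stoneOpen, Set.mem_ofPred_eq,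
    (isClassicalPrimeLatticeIdeal_coe p).isLatticeIdealSet.idealSpan_subset_iff]

theorem stoneOpen_iUnion {ι : Sort*} (S : ι → Set L) :
    stoneOpen (⋃ i, S i) = ⋃ i, stoneOpen (S i) := by
  ext p
  simp [stoneOpen, Set.iUnion_subset_iff]

theorem stoneOpen_eq_biUnion (S : Set L) :
    stoneOpen S = ⋃ a ∈ S, {p : latProperPrimes L | a ∉ (p : Set L)} := by
  ext p
  simp [stoneOpen, Set.not_subset]

theorem isOpen_generateFrom_iff_eq_stoneOpen (U : Set (latProperPrimes L)) :
    (TopologicalSpace.generateFrom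
        {V : Set (latProperPrimes L) | ∃ a : L, V = {p : latProperPrimes L | a ∉ (p : Set L)}}).IsOpen U ↔
      ∃ I : Set L, IsLatticeIdealSet I ∧ U = stoneOpen I := by
  constructor
  · intro hU
    induction hU with
    | basic V hV =>
      obtain ⟨a, rfl⟩ := hV
      exact ⟨Set.Iic a, isLatticeIdealSet_Iic a, (stoneOpen_Iic a).symm⟩
    | univ => exact ⟨Set.univ, isLatticeIdealSet_univ, stoneOpen_univ.symm⟩
    | inter V W _ _ ihV ihW =>
      obtain ⟨I, hI, rfl⟩ := ihV
      obtain ⟨J, hJ, rfl⟩ := ihW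
      exact ⟨I ∩ J, hI.inter hJ, (stoneOpen_inter hI hJ).symm⟩
    | sUnion 𝒱 _ ih =>
      choose I _ hVI using ih
      refine ⟨idealSpan (⋃ (V) (hV : V ∈ 𝒱), I V hV), isLatticeIdealSet_idealSpan _, ?_⟩
      simp only [stoneOpen_idealSpan, stoneOpen_iUnion, ← hVI, Set.sUnion_eq_biUnion]
  · rintro ⟨I, -, rfl⟩
    let _ := TopologicalSpace.generateFrom
      {V : Set (latProperPrimes L) | ∃ a : L, V = {p : latProperPrimes L | a ∉ (p : Set L)}}
    rw [stoneOpen_eq_biUnion]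
    exact isOpen_biUnion fun a _ => TopologicalSpace.isOpen_generateFrom_of_mem ⟨a, rfl⟩

end

theorem stmt11_general {L : Type*} [DistribLattice L] [BoundedOrder L] :
    (∀ p : Set L, p ∈ latProperPrimes L ↔ IsClassicalPrimeLatticeIdeal p) ∧
    (∀ U : Set (latProperPrimes L),
      (TopologicalSpace.generateFrom
        {V : Set (latProperPrimes L) |
          ∃ a : L, V = {p : latProperPrimes L | a ∉ (p : Set L)}}).IsOpen U ↔
      ∃ I : Set L, IsLatticeIdealSet I ∧
        U = {p : latProperPrimes L | ¬ I ⊆ (p : Set L)}) :=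
  ⟨fun _ => mem_latProperPrimes_iff, isOpen_generateFrom_iff_eq_stoneOpen⟩

/-- For a bounded distributive lattice `L` with `0 ≠ 1`: a subset `p ⊆ L` is a proper
prime ideal of `(L, ⊕, ⊗)` iff it is a prime ideal of the lattice `L` in the classical
sense; moreover, the topology on the set of such `p` generated by the subbase
`{U⁺ₐ = {p : a ∉ p} : a ∈ L}` coincides with the Stone topology, whose open sets are the
sets `U_I = {p : I ⊄ p}` for lattice ideals `I` of `L`. -/
theorem stmt11 {L : Type*} [DistribLattice L] [BoundedOrder L] (h01 : (⊥ : L) ≠ ⊤) :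
    (∀ p : Set L, p ∈ latProperPrimes L ↔ IsClassicalPrimeLatticeIdeal p) ∧
    (∀ U : Set (latProperPrimes L),
      (TopologicalSpace.generateFrom
        {V : Set (latProperPrimes L) |
          ∃ a : L, V = {p : latProperPrimes L | a ∉ (p : Set L)}}).IsOpen U ↔
      ∃ I : Set L, IsLatticeIdealSet I ∧
        U = {p : latProperPrimes L | ¬ I ⊆ (p : Set L)}) :=
  stmt11_general
end

section
/- Let (S, T⁺, T⁻) be an abstract spectrum, ordered by the specialization order a ≤ b iff a lies in the T⁻-closure of {b}. If A ⊆ S is directed with respect to ≤ (i.e., any two elements of A have an upper bound in A), then A has a supremum in the ordered set (S, ≤). Dually, if A is directed downward (any two elements have a lower bound in A), then A has an infimum in (S, ≤). -/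
/-- The specialization order of an abstract spectrum: `a ≤ b` iff `a` lies in the
`T⁻`-closure of `{b}`. -/
def specLE {S : Type*} (tm : TopologicalSpace S) (a b : S) : Prop :=
  a ∈ @closure S tm {b}

/-!
The `T⁻`-open sets are up-sets for the specialization order, so when `L⁻` is a base for `T⁻`
the principal up-set `↑a` is the intersection of the `L⁻`-neighbourhoods of `a`, hence
`T⁺`-closed. For a directed set `A` the sets `↑a`, `a ∈ A`, form a downward directed family of
`T⁺`-closed sets, each meeting the `T⁻`-closure of `A`, which is `T⁺`-compact; so they have a
common point `g` in that closure. Such a `g` is an upper bound of `A` lying below every upper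
bound. Infima follow by symmetry, because the two topologies induce opposite orders.
-/

open Topology

section SpecializationOrder

variable {S : Type*} {tp tm : TopologicalSpace S}

lemma specLE_iff_specializes {a b : S} : specLE tm a b ↔ @Specializes S tm b a :=
  (@specializes_iff_mem_closure S tm b a).symm

lemma specLE_trans {a b c : S} (hab : specLE tm a b) (hbc : specLE tm b c) : specLE tm a c :=
  specLE_iff_specializes.2 <| (specLE_iff_specializes.1 hbc).trans (specLE_iff_specializes.1 hab)

lemma mem_of_specLE_of_isOpen {U : Set S} (hU : IsOpen[tm] U) {a b : S} (ha : a ∈ U)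
    (hab : specLE tm a b) : b ∈ U :=
  (specLE_iff_specializes.1 hab).mem_open hU ha

lemma isClosed_setOf_specLE (hbase : IsBaseFor tm (specL tm tp)) (a : S) :
    IsClosed[tp] {x | specLE tm a x} := by
  have hup : {x | specLE tm a x} = ⋂ U ∈ {U | U ∈ specL tm tp ∧ a ∈ U}, U := by
    ext x
    simp only [Set.mem_ofPred_eq, Set.mem_iInter]
    refine ⟨fun hax U ⟨hU, haU⟩ => mem_of_specLE_of_isOpen hU.1 haU hax, fun hx => ?_⟩
    refine (@mem_closure_iff S tm _ _).2 fun V hV haV => ?_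
    obtain ⟨U, hU, haU, hUV⟩ := hbase.2 V hV a haV
    exact ⟨x, hUV (hx U ⟨hU, haU⟩), rfl⟩
  rw [hup]
  exact @isClosed_biInter _ _ tp _ _ fun U hU => @isOpen_compl_iff S _ tp |>.1 hU.1.2

lemma specLE_of_specLE_swap (hbase : IsBaseFor tm (specL tm tp)) {a b : S}
    (hba : specLE tp b a) : specLE tm a b :=
  @closure_minimal S tp {a} {x | specLE tm a x}
    (Set.singleton_subset_iff.2 (@subset_closure S tm {a} a rfl)) (isClosed_setOf_specLE hbase a)
    b hba

lemma specLE_iff_specLE_swap (hm : IsBaseFor tm (specL tm tp)) (hp : IsBaseFor tp (specL tp tm))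
    {a b : S} : specLE tm a b ↔ specLE tp b a :=
  ⟨specLE_of_specLE_swap hp, specLE_of_specLE_swap hm⟩

lemma exists_specLE_lub_of_directedOn (hbase : IsBaseFor tm (specL tm tp))
    (hcompact : ∀ F : Set S, IsClosed[tm] F → @IsCompact S tp F) {A : Set S} (hA : A.Nonempty)
    (hdir : DirectedOn (specLE tm) A) :
    ∃ s : S, (∀ a ∈ A, specLE tm a s) ∧
      ∀ s' : S, (∀ a ∈ A, specLE tm a s') → specLE tm s s' := by
  have : Nonempty A := hA.to_subtype
  have hdirected : Directed (· ⊇ ·) fun a : A => {x | specLE tm a x} := by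
    rintro ⟨a, ha⟩ ⟨b, hb⟩
    obtain ⟨c, hc, hac, hbc⟩ := hdir a ha b hb
    exact ⟨⟨c, hc⟩, fun x hcx => specLE_trans hac hcx, fun x hcx => specLE_trans hbc hcx⟩
  obtain ⟨g, hgA, hg⟩ : (closure[tm] A ∩ ⋂ a : A, {x | specLE tm a x}).Nonempty := by
    by_contra hempty
    obtain ⟨⟨a, ha⟩, hdisj⟩ := @IsCompact.elim_directed_family_closed S tp _ _ _
      (hcompact _ (@isClosed_closure S tm A)) (fun a : A => {x | specLE tm a x})
      (fun a => isClosed_setOf_specLE hbase a) (Set.not_nonempty_iff_eq_empty.1 hempty)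
      hdirected
    exact (Set.eq_empty_iff_forall_notMem.1 hdisj) a
      ⟨@subset_closure S tm A a ha, @subset_closure S tm {a} a rfl⟩
  refine ⟨g, fun a ha => Set.mem_iInter.1 hg ⟨a, ha⟩, fun s' hs' => ?_⟩
  exact @closure_minimal S tm _ _ hs' (@isClosed_closure S tm _) g hgA

end SpecializationOrder

/-- In an abstract spectrum, every (nonempty) upward-directed subset has a supremum and
every (nonempty) downward-directed subset has an infimum with respect to the
specialization order. -/
theorem stmt12 {S : Type*} (tp tm : TopologicalSpace S)
    (h : IsAbstractSpectrum tp tm) (A : Set S) (hA : A.Nonempty) :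
    ((∀ a ∈ A, ∀ b ∈ A, ∃ c ∈ A, specLE tm a c ∧ specLE tm b c) →
      ∃ s : S, (∀ a ∈ A, specLE tm a s) ∧
        ∀ s' : S, (∀ a ∈ A, specLE tm a s') → specLE tm s s') ∧
    ((∀ a ∈ A, ∀ b ∈ A, ∃ c ∈ A, specLE tm c a ∧ specLE tm c b) →
      ∃ s : S, (∀ a ∈ A, specLE tm s a) ∧
        ∀ s' : S, (∀ a ∈ A, specLE tm s' a) → specLE tm s' s) := by
  refine ⟨exists_specLE_lub_of_directedOn h.base_minus h.compact_of_minus_closed hA, ?_⟩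
  simp_rw [specLE_iff_specLE_swap h.base_minus h.base_plus]
  exact exists_specLE_lub_of_directedOn h.base_plus h.compact_of_plus_closed hA
end

section
/- If (S, T⁺, T⁻) is an abstract spectrum, then (S, T⁺) is a coherent (spectral) space: it is compact, T₀, sober (every nonempty irreducible closed subset is the closure of a unique point), and its compact open subsets form a base for T⁺ that is closed under finite intersections. -/
section Aux
variable {S : Type*}

lemma specL_isClosed (tp tm : TopologicalSpace S) {U : Set S} (hU : U ∈ specL tp tm) :
    @IsClosed S tm U := ⟨hU.2⟩

lemma t0_aux (tm : TopologicalSpace S) [tp : TopologicalSpace S]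
    (h : IsAbstractSpectrum tp tm) (ht : @T0Space S tm) : T0Space S := by
  have ht' := (@t0Space_iff_exists_isOpen_xor'_mem S tm).mp ht
  rw [t0Space_iff_exists_isOpen_xor'_mem]
  intro x y hxy
  obtain ⟨U, hUo, hxor⟩ := ht' hxy
  rcases hxor with ⟨hxU, hyU⟩ | ⟨hyU, hxU⟩
  · obtain ⟨W, hW, hxW, hWU⟩ := h.base_minus.2 U hUo x hxU
    exact ⟨Wᶜ, hW.2, Or.inr ⟨fun hyW => hyU (hWU hyW), fun hxc => hxc hxW⟩⟩
  · obtain ⟨W, hW, hyW, hWU⟩ := h.base_minus.2 U hUo y hyU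
    exact ⟨Wᶜ, hW.2, Or.inl ⟨fun hxW => hxU (hWU hxW), fun hyc => hyc hyW⟩⟩

lemma sober_aux (tm : TopologicalSpace S) [tp : TopologicalSpace S]
    (h : IsAbstractSpectrum tp tm) (F : Set S) (hF : IsClosed F)
    (hirr : IsIrreducible F) : ∃ x ∈ F, F ⊆ closure {x} := by
  classical
  have hcomp : @IsCompact S tm F := h.compact_of_plus_closed F hF
  have key : (F ∩ ⋂ i : {U : Set S // U ∈ specL tp tm ∧ (F ∩ U).Nonempty},
      (i : Set S)).Nonempty := by
    by_contra hcon
    rw [Set.not_nonempty_iff_eq_empty] at hcon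
    obtain ⟨t, ht⟩ := @IsCompact.elim_finite_subfamily_closed S tm F
      {U : Set S // U ∈ specL tp tm ∧ (F ∩ U).Nonempty} hcomp
      (fun i => (i : Set S)) (fun i => specL_isClosed tp tm i.2.1) hcon
    have hne := (isIrreducible_iff_sInter.mp hirr)
      (t.image (fun i : {U : Set S // U ∈ specL tp tm ∧ (F ∩ U).Nonempty} => (i : Set S)))
      (by
        intro u hu
        simp only [Finset.mem_image] at hu
        obtain ⟨i, _, rfl⟩ := hu
        exact i.2.1.1)
      (by
        intro u hu
        simp only [Finset.mem_image] at hu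
        obtain ⟨i, _, rfl⟩ := hu
        exact i.2.2)
    rw [Finset.coe_image, Set.sInter_image, Finset.set_biInter_coe, ht] at hne
    exact hne.ne_empty rfl
  obtain ⟨x, hxF, hxI⟩ := key
  refine ⟨x, hxF, fun y hy => ?_⟩
  rw [mem_closure_iff]
  intro o ho hyo
  obtain ⟨W, hW, hyW, hWo⟩ := h.base_plus.2 o ho y hyo
  exact ⟨x, hWo (Set.mem_iInter.mp hxI ⟨W, hW, ⟨y, hy, hyW⟩⟩), rfl⟩

lemma specL_compact (tm : TopologicalSpace S) [tp : TopologicalSpace S]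
    (h : IsAbstractSpectrum tp tm) {U : Set S} (hU : U ∈ specL tp tm) :
    IsCompact U := h.compact_of_minus_closed U (@IsClosed.mk S tm U hU.2)

lemma compact_open_union (tm : TopologicalSpace S) [tp : TopologicalSpace S]
    (h : IsAbstractSpectrum tp tm) {U : Set S} (hUo : IsOpen U) (hUc : IsCompact U) :
    ∃ t : Finset (Set S), (∀ W ∈ t, W ∈ specL tp tm) ∧ U = ⋃ W ∈ t, W := by
  classical
  choose W hWL hWmem hWsub using h.base_plus.2 U hUo
  obtain ⟨s, hs⟩ := hUc.elim_finite_subcover (fun x : U => W x x.2)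
    (fun x => (hWL x x.2).1) (fun x hx => Set.mem_iUnion_of_mem ⟨x, hx⟩ (hWmem x hx))
  refine ⟨s.image (fun x : U => W x x.2), ?_, ?_⟩
  · intro V hV
    simp only [Finset.mem_image] at hV
    obtain ⟨x, _, rfl⟩ := hV
    exact hWL x x.2
  · apply Set.Subset.antisymm
    · intro z hz
      obtain ⟨x, hxs, hxz⟩ := by
        have := hs hz
        simpa only [Set.mem_iUnion, exists_prop] using this
      exact Set.mem_biUnion (Finset.mem_image_of_mem _ hxs) hxz
    · intro z hz
      simp only [Set.mem_iUnion, Finset.mem_image, exists_prop] at hz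
      obtain ⟨V, ⟨x, _, rfl⟩, hzV⟩ := hz
      exact hWsub x x.2 hzV

lemma main (tm : TopologicalSpace S) [tp : TopologicalSpace S]
    (h : IsAbstractSpectrum tp tm) :
    CompactSpace S ∧ T0Space S ∧
    (∀ F : Set S, IsClosed F → F.Nonempty →
      (∀ F₁ F₂ : Set S, IsClosed F₁ → IsClosed F₂ → F = F₁ ∪ F₂ →
        F = F₁ ∨ F = F₂) →
      ∃! x : S, F = closure {x}) ∧
    IsBaseFor tp {U : Set S | IsOpen U ∧ IsCompact U} ∧
    (∀ U V : Set S, IsOpen U → IsCompact U → IsOpen V → IsCompact V →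
      IsCompact (U ∩ V)) := by
  have hT0 : T0Space S := by
    rcases h.t0 with h0 | h0
    · exact h0
    · exact t0_aux tm h h0
  refine ⟨?_, hT0, ?_, ?_, ?_⟩
  · exact isCompact_univ_iff.mp (h.compact_of_minus_closed Set.univ (@isClosed_univ S tm))
  · intro F hF hne hirr'
    have hirr : IsIrreducible F := by
      refine ⟨hne, ?_⟩
      rw [isPreirreducible_iff_isClosed_union_isClosed]
      intro z₁ z₂ hz₁ hz₂ hsub
      have := hirr' (F ∩ z₁) (F ∩ z₂) (hF.inter hz₁) (hF.inter hz₂)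
        (by rw [← Set.inter_union_distrib_left]
            exact (Set.inter_eq_self_of_subset_left hsub).symm)
      rcases this with hl | hl
      · exact Or.inl (fun x hx => (hl ▸ hx : x ∈ F ∩ z₁).2)
      · exact Or.inr (fun x hx => (hl ▸ hx : x ∈ F ∩ z₂).2)
    obtain ⟨x, hxF, hsub⟩ := sober_aux tm h F hF hirr
    have hFx : F = closure {x} :=
      Set.Subset.antisymm hsub (closure_minimal (Set.singleton_subset_iff.mpr hxF) hF)
    refine ⟨x, hFx, fun y hy => ?_⟩
    have : closure ({y} : Set S) = closure ({x} : Set S) := by rw [← hy, ← hFx]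
    exact (inseparable_iff_closure_eq.mpr this).eq
  · refine ⟨fun V hV => hV.1, fun U hU x hx => ?_⟩
    obtain ⟨W, hW, hxW, hWU⟩ := h.base_plus.2 U hU x hx
    exact ⟨W, ⟨hW.1, specL_compact tm h hW⟩, hxW, hWU⟩
  · intro U V hUo hUc hVo hVc
    obtain ⟨t, htL, htU⟩ := compact_open_union tm h hUo hUc
    obtain ⟨t', htL', htV⟩ := compact_open_union tm h hVo hVc
    have heq : U ∩ V = ⋃ W ∈ t, ⋃ W' ∈ t', (W ∩ W') := by
      rw [htU, htV, Set.iUnion₂_inter]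
      exact Set.iUnion₂_congr fun W hW => Set.inter_iUnion₂ _ _
    rw [heq]
    apply t.finite_toSet.isCompact_biUnion
    intro W hW
    apply t'.finite_toSet.isCompact_biUnion
    intro W' hW'
    have hmem : W ∩ W' ∈ specL tp tm := by
      refine ⟨IsOpen.inter (htL W hW).1 (htL' W' hW').1, ?_⟩
      rw [Set.compl_inter]
      exact @IsOpen.union S _ _ tm (htL W hW).2 (htL' W' hW').2
    exact specL_compact tm h hmem

end Aux

/-- If `(S, T⁺, T⁻)` is an abstract spectrum, then `(S, T⁺)` is a coherent (spectral)
space: compact, T₀, sober (every nonempty irreducible closed set is the closure of a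
unique point), and its compact open subsets form a base closed under finite
intersections. -/
theorem stmt15 {S : Type*} (tp tm : TopologicalSpace S)
    (h : IsAbstractSpectrum tp tm) :
    @CompactSpace S tp ∧ @T0Space S tp ∧
    (∀ F : Set S, @IsClosed S tp F → F.Nonempty →
      (∀ F₁ F₂ : Set S, @IsClosed S tp F₁ → @IsClosed S tp F₂ → F = F₁ ∪ F₂ →
        F = F₁ ∨ F = F₂) →
      ∃! x : S, F = @closure S tp {x}) ∧
    IsBaseFor tp {U : Set S | tp.IsOpen U ∧ @IsCompact S tp U} ∧
    (∀ U V : Set S, tp.IsOpen U → @IsCompact S tp U → tp.IsOpen V → @IsCompact S tp V →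
      @IsCompact S tp (U ∩ V)) :=
  @main S tm tp h
end

section
/- Let (S, T⁺) be a nonempty coherent space, i.e., a compact sober space whose compact open subsets form a base closed under finite intersections, and let T⁻ be the topology on S generated by the family {S∖U : U compact open in (S, T⁺)}. Then (S, T⁺, T⁻) is an abstract spectrum; in particular, the topology sup{T⁺, T⁻} is compact. -/
/-!
Both `T⁺` and `T⁻` are coarser than the constructible topology, generated by the compact open
sets and their complements, and for a spectral space the constructible topology is compact
(Stacks 0901). A set closed for `T⁺` or `T⁻` is therefore constructibly closed, hence
constructibly compact, hence compact for the other, coarser topology; the patch topology is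
coarser as well, so it is compact. For the bases: compact open sets lie in `L⁺`, and finite
intersections of their complements lie in `L⁻`.
-/

open TopologicalSpace Topology Set

lemma isBaseFor_iff_isTopologicalBasis {X : Type*} {t : TopologicalSpace X} {B : Set (Set X)} :
    IsBaseFor t B ↔ @IsTopologicalBasis X t B :=
  letI := t
  ⟨fun h => isTopologicalBasis_of_isOpen_of_nhds h.1 fun _ U hx hU => h.2 U hU _ hx,
    fun h => ⟨fun _ => h.isOpen, fun _ hU _ hx => h.exists_subset_of_mem_open hx hU⟩⟩

lemma QuasiSober.of_forall_eq_closure_singleton {X : Type*} [TopologicalSpace X]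
    (h : ∀ F : Set X, IsClosed F → F.Nonempty →
      (∀ F₁ F₂ : Set X, IsClosed F₁ → IsClosed F₂ → F = F₁ ∪ F₂ → F = F₁ ∨ F = F₂) →
      ∃ x : X, F = closure {x}) :
    QuasiSober X where
  sober {Z} hZ hZc := by
    refine (h Z hZc hZ.nonempty fun F₁ F₂ h₁ h₂ hZ₁₂ => ?_).imp fun x hx => hx.symm
    rcases isPreirreducible_iff_isClosed_union_isClosed.mp hZ.isPreirreducible F₁ F₂ h₁ h₂
      hZ₁₂.subset with hZ₁ | hZ₂
    · exact .inl (hZ₁.antisymm (hZ₁₂ ▸ subset_union_left))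
    · exact .inr (hZ₂.antisymm (hZ₁₂ ▸ subset_union_right))

section

variable {X : Type*}

lemma IsCompact.of_le {t t' : TopologicalSpace X} {s : Set X} (hs : @IsCompact X t s)
    (h : t ≤ t') : @IsCompact X t' s := by
  simpa using @IsCompact.image X X t t' s id hs (continuous_id_of_le h)

lemma IsClosed.isCompact_of_le {t t₁ t₂ : TopologicalSpace X} [@CompactSpace X t]
    (h₁ : t ≤ t₁) (h₂ : t ≤ t₂) {F : Set X} (hF : IsClosed[t₁] F) : @IsCompact X t₂ F :=
  (@IsClosed.isCompact X t F _ (hF.mono h₁)).of_le h₂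

lemma CompactSpace.of_le {t t' : TopologicalSpace X} [@CompactSpace X t] (h : t ≤ t') :
    @CompactSpace X t' :=
  @Function.Surjective.compactSpace _ _ t t' _ (continuous_id_of_le h) _ Function.surjective_id

variable [TopologicalSpace X]

/-- Hochster's inverse topology, the `T⁻` of an abstract spectrum. -/
abbrev inverseTopology (X : Type*) [TopologicalSpace X] : TopologicalSpace X :=
  generateFrom {V | ∃ U : Set X, IsOpen U ∧ IsCompact U ∧ V = Uᶜ}

lemma constructibleTopology_le_inverseTopology : constructibleTopology X ≤ inverseTopology X :=
  le_generateFrom fun _ ⟨U, hUo, hUc, hV⟩ => hV ▸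
    IsCompact.isOpen_constructibleTopology_of_isClosed (by rwa [compl_compl]) hUo.isClosed_compl

lemma constructibleTopology_le [PrespectralSpace X] :
    constructibleTopology X ≤ ‹TopologicalSpace X› := fun U hU => by
  obtain ⟨B, hB, rfl⟩ := PrespectralSpace.isTopologicalBasis.open_eq_sUnion hU
  exact @isOpen_sUnion _ (constructibleTopology X) _
    fun V hV => (hB hV).2.isOpen_constructibleTopology_of_isOpen (hB hV).1

lemma compactSpace_constructibleTopology [CompactSpace X] [QuasiSober X] [PrespectralSpace X]
    [QuasiSeparatedSpace X] : @CompactSpace X (constructibleTopology X) :=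
  @Function.Surjective.compactSpace _ _ _ (constructibleTopology X) _
    (WithTopology.continuous_ofTopology _) _ (WithTopology.ofTopology_surjective _)

lemma isTopologicalBasis_specL_inverseTopology [PrespectralSpace X] :
    IsTopologicalBasis (specL ‹_› (inverseTopology X)) :=
  PrespectralSpace.isTopologicalBasis.of_isOpen_of_subset (fun _ h => h.1)
    fun U hU => ⟨hU.1, isOpen_generateFrom_of_mem ⟨U, hU.1, hU.2, rfl⟩⟩

lemma isTopologicalBasis_inverseTopology_specL :
    @IsTopologicalBasis X (inverseTopology X) (specL (inverseTopology X) ‹_›) := by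
  have hbasis := @isTopologicalBasis_of_subbasis X (inverseTopology X) _ rfl
  refine @IsTopologicalBasis.of_isOpen_of_subset X (inverseTopology X) _ _ (fun _ h => h.1)
    hbasis fun V hV => ⟨@IsTopologicalBasis.isOpen X (inverseTopology X) _ _ hbasis hV, ?_⟩
  obtain ⟨F, ⟨-, hF⟩, rfl⟩ := hV
  rw [compl_sInter]
  refine isOpen_sUnion ?_
  rintro _ ⟨_, hUF, rfl⟩
  obtain ⟨U, hU, -, rfl⟩ := hF hUF
  rwa [compl_compl]

end

/-- Let `(S, T⁺)` be a nonempty coherent space (compact, T₀, sober, with the compact open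
sets a base closed under finite intersections) and let `T⁻` be the topology generated by
the complements of compact open sets. Then `(S, T⁺, T⁻)` is an abstract spectrum; in
particular the topology `sup{T⁺, T⁻}` is compact. -/
theorem stmt16 {S : Type*} [Nonempty S] (tp : TopologicalSpace S)
    (hcomp : @CompactSpace S tp) (ht0 : @T0Space S tp)
    (hsober : ∀ F : Set S, @IsClosed S tp F → F.Nonempty →
      (∀ F₁ F₂ : Set S, @IsClosed S tp F₁ → @IsClosed S tp F₂ → F = F₁ ∪ F₂ →
        F = F₁ ∨ F = F₂) →
      ∃ x : S, F = @closure S tp {x})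
    (hbase : IsBaseFor tp {U : Set S | tp.IsOpen U ∧ @IsCompact S tp U})
    (hinter : ∀ U V : Set S, tp.IsOpen U → @IsCompact S tp U → tp.IsOpen V →
      @IsCompact S tp V → @IsCompact S tp (U ∩ V))
    (tm : TopologicalSpace S)
    (htm : tm = TopologicalSpace.generateFrom
      {V : Set S | ∃ U : Set S, tp.IsOpen U ∧ @IsCompact S tp U ∧ V = Uᶜ}) :
    IsAbstractSpectrum tp tm ∧
    @CompactSpace S (TopologicalSpace.generateFrom {U : Set S | tp.IsOpen U ∨ tm.IsOpen U}) := by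
  let := tp
  have : QuasiSober S := .of_forall_eq_closure_singleton hsober
  have : QuasiSeparatedSpace S := ⟨hinter⟩
  have : PrespectralSpace S := ⟨isBaseFor_iff_isTopologicalBasis.mp hbase⟩
  have := compactSpace_constructibleTopology (X := S)
  obtain rfl : tm = inverseTopology S := htm
  have hp : constructibleTopology S ≤ tp := constructibleTopology_le
  have hm : constructibleTopology S ≤ inverseTopology S := constructibleTopology_le_inverseTopology
  refine ⟨⟨‹_›, isBaseFor_iff_isTopologicalBasis.mpr isTopologicalBasis_specL_inverseTopology,
    isBaseFor_iff_isTopologicalBasis.mpr isTopologicalBasis_inverseTopology_specL,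
    fun F hF => hF.isCompact_of_le hp hm, fun F hF => hF.isCompact_of_le hm hp, .inl ht0⟩, ?_⟩
  exact CompactSpace.of_le <|
    le_generateFrom fun U hU => hU.elim (IsOpen.mono · hp) (IsOpen.mono · hm)
end

section
/- Let X be a separative algebra. Then for any subsets A, B ⊆ X and any x ∈ X: if μ(A) ∩ α(B ∪ {x}) ≠ ∅ and μ(A ∪ {x}) ∩ α(B) ≠ ∅, then μ(A) ∩ α(B) ≠ ∅. Consequently, if F is a filter, I is an ideal and F ∩ I = ∅, then for every x ∈ X either μ(F ∪ {x}) ∩ I = ∅ or F ∩ α(I ∪ {x}) = ∅. -/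
/-- A carrier for two multivalued binary operations `·` and `+` on `X`. -/
structure PresepOps (X : Type*) where
  mul : X → X → Set X
  add : X → X → Set X

namespace PresepOps

variable {X : Type*} (P : PresepOps X)

/-- The set extension `A·B = ⋃ {a·b : a ∈ A, b ∈ B}`. -/
def smul (A B : Set X) : Set X := ⋃ a ∈ A, ⋃ b ∈ B, P.mul a b

/-- The set extension `A+B = ⋃ {a+b : a ∈ A, b ∈ B}`. -/
def sadd (A B : Set X) : Set X := ⋃ a ∈ A, ⋃ b ∈ B, P.add a b

/-- `(X, ·, +)` is a preseparative algebra: `X` is nonempty, both operations are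
commutative and associative (associativity via the set extensions), and axiom (iii):
if `a ∈ b+x` and `c ∈ d·x` then `(a·d) ∩ (b+c) ≠ ∅`. -/
structure IsPresep : Prop where
  nonempty : Nonempty X
  mul_comm : ∀ a b : X, P.mul a b = P.mul b a
  add_comm : ∀ a b : X, P.add a b = P.add b a
  mul_assoc : ∀ a b c : X, P.smul {a} (P.mul b c) = P.smul (P.mul a b) {c}
  add_assoc : ∀ a b c : X, P.sadd {a} (P.add b c) = P.sadd (P.add a b) {c}
  sep : ∀ a b c d x : X, a ∈ P.add b x → c ∈ P.mul d x →
    (P.mul a d ∩ P.add b c).Nonempty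

/-- A filter: `F·F ⊆ F`. -/
def IsFilter (F : Set X) : Prop := P.smul F F ⊆ F

/-- An ideal: `I+I ⊆ I`. -/
def IsIdeal (I : Set X) : Prop := P.sadd I I ⊆ I

/-- A prime filter: a filter whose complement is an ideal. -/
def IsPrimeFilter (F : Set X) : Prop := P.IsFilter F ∧ P.IsIdeal Fᶜ

/-- A prime ideal: an ideal whose complement is a filter. -/
def IsPrimeIdeal (I : Set X) : Prop := P.IsIdeal I ∧ P.IsFilter Iᶜ

/-- `μ(A)`: the smallest filter containing `A` (the intersection of all filters
containing `A`, which is a filter). -/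
def mu (A : Set X) : Set X := ⋂₀ {F | P.IsFilter F ∧ A ⊆ F}

/-- `α(A)`: the smallest ideal containing `A` (the intersection of all ideals
containing `A`, which is an ideal). -/
def alpha (A : Set X) : Set X := ⋂₀ {I | P.IsIdeal I ∧ A ⊆ I}

/-- `x ≤ y` iff `μ({x}) ∩ α({y}) ≠ ∅`. A preseparative algebra is a separative algebra
iff this relation is transitive. -/
def le (x y : X) : Prop := (P.mu {x} ∩ P.alpha {y}).Nonempty

end PresepOps

namespace PresepOps

variable {X : Type*} {P : PresepOps X}

lemma mem_smul' {A B : Set X} {t : X} :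
    t ∈ P.smul A B ↔ ∃ a ∈ A, ∃ b ∈ B, t ∈ P.mul a b := by
  simp [smul]

lemma mem_sadd' {A B : Set X} {t : X} :
    t ∈ P.sadd A B ↔ ∃ a ∈ A, ∃ b ∈ B, t ∈ P.add a b := by
  simp [sadd]

lemma subset_mu (A : Set X) : A ⊆ P.mu A :=
  fun _ ha => Set.mem_sInter.mpr fun _ hF => hF.2 ha

lemma mu_subset {A G : Set X} (hG : P.IsFilter G) (hAG : A ⊆ G) : P.mu A ⊆ G :=
  fun _ h => Set.mem_sInter.mp h G ⟨hG, hAG⟩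

lemma isFilter_mu (A : Set X) : P.IsFilter (P.mu A) := by
  intro t ht
  rcases mem_smul'.mp ht with ⟨a, ha, b, hb, htab⟩
  refine Set.mem_sInter.mpr fun F hF => ?_
  exact hF.1 (mem_smul'.mpr ⟨a, Set.mem_sInter.mp ha F hF, b, Set.mem_sInter.mp hb F hF, htab⟩)

lemma mul_subset_filter {G : Set X} (hG : P.IsFilter G) {a b : X}
    (ha : a ∈ G) (hb : b ∈ G) : P.mul a b ⊆ G :=
  fun _ ht => hG (mem_smul'.mpr ⟨a, ha, b, hb, ht⟩)

lemma subset_alpha (A : Set X) : A ⊆ P.alpha A :=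
  fun _ ha => Set.mem_sInter.mpr fun _ hI => hI.2 ha

lemma alpha_subset {A I : Set X} (hI : P.IsIdeal I) (hAI : A ⊆ I) : P.alpha A ⊆ I :=
  fun _ h => Set.mem_sInter.mp h I ⟨hI, hAI⟩

lemma isIdeal_alpha (A : Set X) : P.IsIdeal (P.alpha A) := by
  intro t ht
  rcases mem_sadd'.mp ht with ⟨a, ha, b, hb, htab⟩
  refine Set.mem_sInter.mpr fun I hI => ?_
  exact hI.1 (mem_sadd'.mpr ⟨a, Set.mem_sInter.mp ha I hI, b, Set.mem_sInter.mp hb I hI, htab⟩)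

lemma add_subset_ideal {I : Set X} (hI : P.IsIdeal I) {a b : X}
    (ha : a ∈ I) (hb : b ∈ I) : P.add a b ⊆ I :=
  fun _ ht => hI (mem_sadd'.mpr ⟨a, ha, b, hb, ht⟩)

lemma mu_mono {A B : Set X} (h : A ⊆ B) : P.mu A ⊆ P.mu B :=
  mu_subset (isFilter_mu B) (h.trans (subset_mu B))

lemma alpha_mono {A B : Set X} (h : A ⊆ B) : P.alpha A ⊆ P.alpha B :=
  alpha_subset (isIdeal_alpha B) (h.trans (subset_alpha B))

/-- associativity, elementwise, forward direction (additive) -/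
lemma add_assoc_mem (hP : P.IsPresep) {a b c s t : X}
    (hs : s ∈ P.add b c) (ht : t ∈ P.add a s) :
    ∃ r ∈ P.add a b, t ∈ P.add r c := by
  have h : t ∈ P.sadd {a} (P.add b c) :=
    mem_sadd'.mpr ⟨a, Set.mem_singleton a, s, hs, ht⟩
  rw [hP.add_assoc] at h
  rcases mem_sadd'.mp h with ⟨r, hr, c', hc', ht'⟩
  rw [Set.mem_singleton_iff] at hc'
  subst hc'
  exact ⟨r, hr, ht'⟩

/-- associativity, elementwise, backward direction (additive) -/
lemma add_assoc_mem' (hP : P.IsPresep) {a b c r t : X}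
    (hr : r ∈ P.add a b) (ht : t ∈ P.add r c) :
    ∃ s ∈ P.add b c, t ∈ P.add a s := by
  have h : t ∈ P.sadd (P.add a b) {c} :=
    mem_sadd'.mpr ⟨r, hr, c, Set.mem_singleton c, ht⟩
  rw [← hP.add_assoc] at h
  rcases mem_sadd'.mp h with ⟨a', ha', s, hs, ht'⟩
  rw [Set.mem_singleton_iff] at ha'
  subst ha'
  exact ⟨s, hs, ht'⟩

/-- associativity, elementwise, forward direction (multiplicative) -/
lemma mul_assoc_mem (hP : P.IsPresep) {a b c s t : X}
    (hs : s ∈ P.mul b c) (ht : t ∈ P.mul a s) :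
    ∃ r ∈ P.mul a b, t ∈ P.mul r c := by
  have h : t ∈ P.smul {a} (P.mul b c) :=
    mem_smul'.mpr ⟨a, Set.mem_singleton a, s, hs, ht⟩
  rw [hP.mul_assoc] at h
  rcases mem_smul'.mp h with ⟨r, hr, c', hc', ht'⟩
  rw [Set.mem_singleton_iff] at hc'
  subst hc'
  exact ⟨r, hr, ht'⟩

/-- associativity, elementwise, backward direction (multiplicative) -/
lemma mul_assoc_mem' (hP : P.IsPresep) {a b c r t : X}
    (hr : r ∈ P.mul a b) (ht : t ∈ P.mul r c) :
    ∃ s ∈ P.mul b c, t ∈ P.mul a s := by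
  have h : t ∈ P.smul (P.mul a b) {c} :=
    mem_smul'.mpr ⟨r, hr, c, Set.mem_singleton c, ht⟩
  rw [← hP.mul_assoc] at h
  rcases mem_smul'.mp h with ⟨a', ha', s, hs, ht'⟩
  rw [Set.mem_singleton_iff] at ha'
  subst ha'
  exact ⟨s, hs, ht'⟩

/-- Decomposition of `α(I ∪ {x})` for an ideal `I`. -/
lemma alpha_union_singleton (hP : P.IsPresep) {I : Set X} (hI : P.IsIdeal I) {x u : X}
    (hu : u ∈ P.alpha (I ∪ {x})) :
    u ∈ I ∨ u ∈ P.alpha {x} ∨ ∃ b ∈ I, ∃ p ∈ P.alpha {x}, u ∈ P.add b p := by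
  set J : Set X := P.alpha {x} with hJdef
  have hJ : P.IsIdeal J := isIdeal_alpha _
  set D : Set X := {u | u ∈ I ∨ u ∈ J ∨ ∃ b ∈ I, ∃ p ∈ J, u ∈ P.add b p} with hDdef
  have hD : P.IsIdeal D := by
    intro t ht
    rcases mem_sadd'.mp ht with ⟨d, hd, e, he, htde⟩
    have comm : ∀ y z : X, P.add y z = P.add z y := hP.add_comm
    rcases hd with hdI | hdJ | ⟨b, hb, p, hp, hdbp⟩ <;>
      rcases he with heI | heJ | ⟨b', hb', p', hp', hebp⟩
    · exact Or.inl (add_subset_ideal hI hdI heI htde)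
    · exact Or.inr (Or.inr ⟨d, hdI, e, heJ, htde⟩)
    · -- d ∈ I, e ∈ add b' p'
      obtain ⟨r, hr, htr⟩ := add_assoc_mem hP hebp htde
      exact Or.inr (Or.inr ⟨r, add_subset_ideal hI hdI hb' hr, p', hp', htr⟩)
    · exact Or.inr (Or.inr ⟨e, heI, d, hdJ, (comm d e) ▸ htde⟩)
    · exact Or.inr (Or.inl (add_subset_ideal hJ hdJ heJ htde))
    · -- d ∈ J, e ∈ add b' p'
      have hebp' : e ∈ P.add p' b' := (comm b' p') ▸ hebp
      obtain ⟨r, hr, htr⟩ := add_assoc_mem hP hebp' htde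
      exact Or.inr (Or.inr ⟨b', hb', r, add_subset_ideal hJ hdJ hp' hr, (comm r b') ▸ htr⟩)
    · -- d ∈ add b p, e ∈ I
      have htde' : t ∈ P.add e d := (comm d e) ▸ htde
      obtain ⟨r, hr, htr⟩ := add_assoc_mem hP hdbp htde'
      exact Or.inr (Or.inr ⟨r, add_subset_ideal hI heI hb hr, p, hp, htr⟩)
    · -- d ∈ add b p, e ∈ J
      have htde' : t ∈ P.add e d := (comm d e) ▸ htde
      have hdbp' : d ∈ P.add p b := (comm b p) ▸ hdbp
      obtain ⟨r, hr, htr⟩ := add_assoc_mem hP hdbp' htde'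
      exact Or.inr (Or.inr ⟨b, hb, r, add_subset_ideal hJ heJ hp hr, (comm r b) ▸ htr⟩)
    · -- d ∈ add b p, e ∈ add b' p'
      obtain ⟨r, hr, htr⟩ := add_assoc_mem hP hebp htde
      -- r ∈ add d b', t ∈ add r p'
      have hr' : r ∈ P.add b' d := (comm d b') ▸ hr
      obtain ⟨r2, hr2, hrr2⟩ := add_assoc_mem hP hdbp hr'
      -- r2 ∈ add b' b, r ∈ add r2 p
      obtain ⟨s, hs, hts⟩ := add_assoc_mem' hP hrr2 htr
      -- s ∈ add p p', t ∈ add r2 s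
      exact Or.inr (Or.inr ⟨r2, add_subset_ideal hI hb' hb hr2,
        s, add_subset_ideal hJ hp hp' hs, hts⟩)
  have hsub : I ∪ {x} ⊆ D := by
    rintro y (hy | hy)
    · exact Or.inl hy
    · rw [Set.mem_singleton_iff] at hy
      subst hy
      exact Or.inr (Or.inl (subset_alpha _ (Set.mem_singleton y)))
  exact alpha_subset hD hsub hu

/-- Decomposition of `μ(G ∪ {x})` for a filter `G`. -/
lemma mu_union_singleton (hP : P.IsPresep) {G : Set X} (hG : P.IsFilter G) {x v : X}
    (hv : v ∈ P.mu (G ∪ {x})) :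
    v ∈ G ∨ v ∈ P.mu {x} ∨ ∃ a ∈ G, ∃ q ∈ P.mu {x}, v ∈ P.mul a q := by
  set J : Set X := P.mu {x} with hJdef
  have hJ : P.IsFilter J := isFilter_mu _
  set D : Set X := {v | v ∈ G ∨ v ∈ J ∨ ∃ a ∈ G, ∃ q ∈ J, v ∈ P.mul a q} with hDdef
  have hD : P.IsFilter D := by
    intro t ht
    rcases mem_smul'.mp ht with ⟨d, hd, e, he, htde⟩
    have comm : ∀ y z : X, P.mul y z = P.mul z y := hP.mul_comm
    rcases hd with hdI | hdJ | ⟨b, hb, p, hp, hdbp⟩ <;>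
      rcases he with heI | heJ | ⟨b', hb', p', hp', hebp⟩
    · exact Or.inl (mul_subset_filter hG hdI heI htde)
    · exact Or.inr (Or.inr ⟨d, hdI, e, heJ, htde⟩)
    · obtain ⟨r, hr, htr⟩ := mul_assoc_mem hP hebp htde
      exact Or.inr (Or.inr ⟨r, mul_subset_filter hG hdI hb' hr, p', hp', htr⟩)
    · exact Or.inr (Or.inr ⟨e, heI, d, hdJ, (comm d e) ▸ htde⟩)
    · exact Or.inr (Or.inl (mul_subset_filter hJ hdJ heJ htde))
    · have hebp' : e ∈ P.mul p' b' := (comm b' p') ▸ hebp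
      obtain ⟨r, hr, htr⟩ := mul_assoc_mem hP hebp' htde
      exact Or.inr (Or.inr ⟨b', hb', r, mul_subset_filter hJ hdJ hp' hr, (comm r b') ▸ htr⟩)
    · have htde' : t ∈ P.mul e d := (comm d e) ▸ htde
      obtain ⟨r, hr, htr⟩ := mul_assoc_mem hP hdbp htde'
      exact Or.inr (Or.inr ⟨r, mul_subset_filter hG heI hb hr, p, hp, htr⟩)
    · have htde' : t ∈ P.mul e d := (comm d e) ▸ htde
      have hdbp' : d ∈ P.mul p b := (comm b p) ▸ hdbp
      obtain ⟨r, hr, htr⟩ := mul_assoc_mem hP hdbp' htde'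
      exact Or.inr (Or.inr ⟨b, hb, r, mul_subset_filter hJ heJ hp hr, (comm r b) ▸ htr⟩)
    · obtain ⟨r, hr, htr⟩ := mul_assoc_mem hP hebp htde
      have hr' : r ∈ P.mul b' d := (comm d b') ▸ hr
      obtain ⟨r2, hr2, hrr2⟩ := mul_assoc_mem hP hdbp hr'
      obtain ⟨s, hs, hts⟩ := mul_assoc_mem' hP hrr2 htr
      exact Or.inr (Or.inr ⟨r2, mul_subset_filter hG hb' hb hr2,
        s, mul_subset_filter hJ hp hp' hs, hts⟩)
  have hsub : G ∪ {x} ⊆ D := by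
    rintro y (hy | hy)
    · exact Or.inl hy
    · rw [Set.mem_singleton_iff] at hy
      subst hy
      exact Or.inr (Or.inl (subset_mu _ (Set.mem_singleton y)))
  exact mu_subset hD hsub hv

/-- Key lemma (additive): if `u ∈ b + p` and `e ∈ μ{p}`, then there are
`b' ∈ α{b}` and `w ∈ μ{u}` with `w ∈ b' + e`. -/
lemma key_add (hP : P.IsPresep) {p b u : X} (hu : u ∈ P.add b p) {e : X}
    (he : e ∈ P.mu {p}) :
    ∃ b' ∈ P.alpha {b}, ∃ w ∈ P.mu {u}, w ∈ P.add b' e := by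
  set E : Set X := {e | ∃ b' ∈ P.alpha {b}, ∃ w ∈ P.mu {u}, w ∈ P.add b' e} with hEdef
  have hE : P.IsFilter E := by
    intro t ht
    rcases mem_smul'.mp ht with ⟨e1, ⟨b1, hb1, w1, hw1, hw1'⟩, e2, ⟨b2, hb2, w2, hw2, hw2'⟩, hte⟩
    have hte' : t ∈ P.mul e2 e1 := (hP.mul_comm e2 e1).symm ▸ hte
    obtain ⟨s1, hs1m, hs1a⟩ := hP.sep w1 b1 t e2 e1 hw1' hte'
    obtain ⟨s2, hs2m, hs2a⟩ := hP.sep w2 b2 s1 w1 e2 hw2' hs1m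
    obtain ⟨b3, hb3, hs2'⟩ := add_assoc_mem hP hs1a hs2a
    exact ⟨b3, add_subset_ideal (isIdeal_alpha _) hb2 hb1 hb3,
      s2, mul_subset_filter (isFilter_mu _) hw2 hw1 hs2m, hs2'⟩
  have hsub : ({p} : Set X) ⊆ E := by
    intro y hy
    rw [Set.mem_singleton_iff] at hy
    subst hy
    exact ⟨b, subset_alpha _ (Set.mem_singleton b), u, subset_mu _ (Set.mem_singleton u), hu⟩
  exact mu_subset hE hsub he

/-- Key lemma (multiplicative): if `v ∈ a · q` and `e ∈ α{q}`, then there are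
`a' ∈ μ{a}` and `w ∈ α{v}` with `w ∈ a' · e`. -/
lemma key_mul (hP : P.IsPresep) {q a v : X} (hv : v ∈ P.mul a q) {e : X}
    (he : e ∈ P.alpha {q}) :
    ∃ a' ∈ P.mu {a}, ∃ w ∈ P.alpha {v}, w ∈ P.mul a' e := by
  set E : Set X := {e | ∃ a' ∈ P.mu {a}, ∃ w ∈ P.alpha {v}, w ∈ P.mul a' e} with hEdef
  have hE : P.IsIdeal E := by
    intro t ht
    rcases mem_sadd'.mp ht with ⟨e1, ⟨a1, ha1, w1, hw1, hw1'⟩, e2, ⟨a2, ha2, w2, hw2, hw2'⟩, hte⟩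
    have hte' : t ∈ P.add e2 e1 := (hP.add_comm e2 e1).symm ▸ hte
    obtain ⟨s1, hs1m, hs1a⟩ := hP.sep t e2 w1 a1 e1 hte' hw1'
    -- s1 ∈ mul t a1, s1 ∈ add e2 w1
    have hs1a' : s1 ∈ P.add w1 e2 := (hP.add_comm e2 w1) ▸ hs1a
    obtain ⟨s2, hs2m, hs2a⟩ := hP.sep s1 w1 w2 a2 e2 hs1a' hw2'
    -- s2 ∈ mul s1 a2, s2 ∈ add w1 w2
    have hs2m' : s2 ∈ P.mul a2 s1 := (hP.mul_comm s1 a2) ▸ hs2m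
    have hs1m' : s1 ∈ P.mul a1 t := (hP.mul_comm t a1) ▸ hs1m
    obtain ⟨a3, ha3, hs2t⟩ := mul_assoc_mem hP hs1m' hs2m'
    exact ⟨a3, mul_subset_filter (isFilter_mu _) ha2 ha1 ha3,
      s2, add_subset_ideal (isIdeal_alpha _) hw1 hw2 hs2a, hs2t⟩
  have hsub : ({q} : Set X) ⊆ E := by
    intro y hy
    rw [Set.mem_singleton_iff] at hy
    subst hy
    exact ⟨a, subset_mu _ (Set.mem_singleton a), v, subset_alpha _ (Set.mem_singleton v), hv⟩
  exact alpha_subset hE hsub he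

end PresepOps

/-- In a separative algebra: if `μ(A) ∩ α(B ∪ {x}) ≠ ∅` and `μ(A ∪ {x}) ∩ α(B) ≠ ∅`,
then `μ(A) ∩ α(B) ≠ ∅`. Consequently, if `F` is a filter, `I` an ideal and `F ∩ I = ∅`,
then for every `x` either `μ(F ∪ {x}) ∩ I = ∅` or `F ∩ α(I ∪ {x}) = ∅`. -/
theorem stmt17 {X : Type*} (P : PresepOps X) (hP : P.IsPresep)
    (hsep : Transitive P.le) :
    (∀ (A B : Set X) (x : X),
      (P.mu A ∩ P.alpha (B ∪ {x})).Nonempty →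
      (P.mu (A ∪ {x}) ∩ P.alpha B).Nonempty →
      (P.mu A ∩ P.alpha B).Nonempty) ∧
    (∀ F I : Set X, P.IsFilter F → P.IsIdeal I → F ∩ I = ∅ →
      ∀ x : X, P.mu (F ∪ {x}) ∩ I = ∅ ∨ F ∩ P.alpha (I ∪ {x}) = ∅) := by
  open PresepOps in
  have part1 : ∀ (A B : Set X) (x : X),
      (P.mu A ∩ P.alpha (B ∪ {x})).Nonempty →
      (P.mu (A ∪ {x}) ∩ P.alpha B).Nonempty →
      (P.mu A ∩ P.alpha B).Nonempty := by
    intro A B x h1 h2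
    obtain ⟨u, huG, huBx⟩ := h1
    obtain ⟨v, hvAx, hvI⟩ := h2
    have hG : P.IsFilter (P.mu A) := isFilter_mu A
    have hI : P.IsIdeal (P.alpha B) := isIdeal_alpha B
    have hu2 : u ∈ P.alpha (P.alpha B ∪ {x}) :=
      alpha_mono (Set.union_subset_union_left _ (subset_alpha B)) huBx
    have hv2 : v ∈ P.mu (P.mu A ∪ {x}) :=
      mu_mono (Set.union_subset_union_left _ (subset_mu A)) hvAx
    rcases alpha_union_singleton hP hI hu2 with huI | huJ | ⟨b, hb, p, hp, hubp⟩
    · exact ⟨u, huG, huI⟩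
    · -- u ∈ α{x}
      rcases mu_union_singleton hP hG hv2 with hvG | hvQ | ⟨a, ha, q, hq, hvaq⟩
      · exact ⟨v, hvG, hvI⟩
      · -- v ∈ μ{x}: u ≤ x ≤ v
        have lux : P.le u x := ⟨u, subset_mu _ (Set.mem_singleton u), huJ⟩
        have lxv : P.le x v := ⟨v, hvQ, subset_alpha _ (Set.mem_singleton v)⟩
        obtain ⟨e, heu, hev⟩ := hsep lux lxv
        exact ⟨e, mu_subset hG (Set.singleton_subset_iff.mpr huG) heu,
          alpha_subset hI (Set.singleton_subset_iff.mpr hvI) hev⟩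
      · -- v ∈ mul a q : u ≤ x ≤ q
        have lux : P.le u x := ⟨u, subset_mu _ (Set.mem_singleton u), huJ⟩
        have lxq : P.le x q := ⟨q, hq, subset_alpha _ (Set.mem_singleton q)⟩
        obtain ⟨e, heu, heq⟩ := hsep lux lxq
        obtain ⟨a', ha', w, hw, hwm⟩ := key_mul hP hvaq heq
        refine ⟨w, ?_, alpha_subset hI (Set.singleton_subset_iff.mpr hvI) hw⟩
        exact mul_subset_filter hG (mu_subset hG (Set.singleton_subset_iff.mpr ha) ha')
          (mu_subset hG (Set.singleton_subset_iff.mpr huG) heu) hwm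
    · -- u ∈ add b p
      rcases mu_union_singleton hP hG hv2 with hvG | hvQ | ⟨a, ha, q, hq, hvaq⟩
      · exact ⟨v, hvG, hvI⟩
      · -- v ∈ μ{x} : p ≤ x ≤ v
        have lpx : P.le p x := ⟨p, subset_mu _ (Set.mem_singleton p), hp⟩
        have lxv : P.le x v := ⟨v, hvQ, subset_alpha _ (Set.mem_singleton v)⟩
        obtain ⟨e, hep, hev⟩ := hsep lpx lxv
        obtain ⟨b', hb', w, hw, hwa⟩ := key_add hP hubp hep
        refine ⟨w, mu_subset hG (Set.singleton_subset_iff.mpr huG) hw, ?_⟩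
        exact add_subset_ideal hI (alpha_subset hI (Set.singleton_subset_iff.mpr hb) hb')
          (alpha_subset hI (Set.singleton_subset_iff.mpr hvI) hev) hwa
      · -- u ∈ add b p, v ∈ mul a q : p ≤ x ≤ q
        have lpx : P.le p x := ⟨p, subset_mu _ (Set.mem_singleton p), hp⟩
        have lxq : P.le x q := ⟨q, hq, subset_alpha _ (Set.mem_singleton q)⟩
        obtain ⟨e, hep, heq⟩ := hsep lpx lxq
        obtain ⟨b', hb', w1, hw1, hw1a⟩ := key_add hP hubp hep
        obtain ⟨a', ha', w2, hw2, hw2m⟩ := key_mul hP hvaq heq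
        obtain ⟨t, htm, hta⟩ := hP.sep w1 b' w2 a' e hw1a hw2m
        refine ⟨t, ?_, ?_⟩
        · exact mul_subset_filter hG (mu_subset hG (Set.singleton_subset_iff.mpr huG) hw1)
            (mu_subset hG (Set.singleton_subset_iff.mpr ha) ha') htm
        · exact add_subset_ideal hI (alpha_subset hI (Set.singleton_subset_iff.mpr hb) hb')
            (alpha_subset hI (Set.singleton_subset_iff.mpr hvI) hw2) hta
  refine ⟨part1, ?_⟩
  intro F I hF hI hFI x
  by_contra h
  push_neg at h
  obtain ⟨h1, h2⟩ := h
  obtain ⟨w1, hw1μ, hw1I⟩ := h1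
  obtain ⟨w2, hw2F, hw2α⟩ := h2
  have hyp1 : (P.mu F ∩ P.alpha (I ∪ {x})).Nonempty :=
    ⟨w2, PresepOps.subset_mu F hw2F, hw2α⟩
  have hyp2 : (P.mu (F ∪ {x}) ∩ P.alpha I).Nonempty :=
    ⟨w1, hw1μ, PresepOps.subset_alpha I hw1I⟩
  obtain ⟨z, hzF, hzI⟩ := part1 F I x hyp1 hyp2
  have : z ∈ F ∩ I :=
    ⟨PresepOps.mu_subset hF subset_rfl hzF, PresepOps.alpha_subset hI subset_rfl hzI⟩
  rw [hFI] at this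
  exact this
end
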